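/- arXiv:1001.3984 — 13 statements merged into one kernel-verified Lean document; each statement's English description precedes it below -/
import Mathlib

section
/- (Scorza's theorem, one direction) If a group G is the union of three pairwise distinct proper subgroups A, B, C, then A, B, and C each have index 2 in G. -/
/-!
Two proper subgroups never cover a group, so each of `A`, `B`, `C` contains an element
`a`, `b`, `c` lying in neither of the other two. Multiplying by these witnesses shows that
pairwise intersections lie in the third subgroup, and then that `B \ A` and `C \ A` are both
carried into `A` by right multiplication with `c`; hence `G \ A` is a single coset of `A`.
-/

namespace Subgroup

variable {G : Type*} [Group G] {A B C : Subgroup G}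

theorem exists_notMem_notMem_of_ne_top (hB : B ≠ ⊤) (hC : C ≠ ⊤) : ∃ x, x ∉ B ∧ x ∉ C := by
  by_contra! h
  have hcover : ((⊤ : Subgroup G) : Set G) ⊆ B ∪ C := fun x _ => or_iff_not_imp_left.mpr (h x)
  rcases SubgroupClass.subset_union.mp hcover with hB' | hC'
  exacts [hB (top_le_iff.mp hB'), hC (top_le_iff.mp hC')]

theorem inf_le_of_forall_mem_or (hcover : ∀ x, x ∈ A ∨ x ∈ B ∨ x ∈ C) {a : G} (haA : a ∈ A)
    (haB : a ∉ B) (haC : a ∉ C) : B ⊓ C ≤ A := by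
  intro x hx
  obtain ⟨hxB, hxC⟩ := mem_inf.mp hx
  rcases hcover (x * a) with h | h | h
  · exact (mul_mem_cancel_right haA).mp h
  · exact absurd ((mul_mem_cancel_left hxB).mp h) haB
  · exact absurd ((mul_mem_cancel_left hxC).mp h) haC

theorem mul_mem_of_forall_mem_or (hcover : ∀ x, x ∈ A ∨ x ∈ B ∨ x ∈ C) (hBC : B ⊓ C ≤ A)
    {x y : G} (hxB : x ∈ B) (hxA : x ∉ A) (hyC : y ∈ C) (hyB : y ∉ B) : x * y ∈ A := by
  by_contra hxy
  rcases (hcover (x * y)).resolve_left hxy with h | h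
  · exact hyB ((mul_mem_cancel_left hxB).mp h)
  · exact hxA (hBC ⟨hxB, (mul_mem_cancel_right hyC).mp h⟩)

theorem index_eq_two_of_forall_mem_or (hcover : ∀ x, x ∈ A ∨ x ∈ B ∨ x ∈ C)
    (hA : A ≠ ⊤) (hB : B ≠ ⊤) (hC : C ≠ ⊤) : A.index = 2 := by
  obtain ⟨a, haB, haC⟩ := exists_notMem_notMem_of_ne_top hB hC
  obtain ⟨b, hbA, hbC⟩ := exists_notMem_notMem_of_ne_top hA hC
  obtain ⟨c, hcA, hcB⟩ := exists_notMem_notMem_of_ne_top hA hB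
  have haA : a ∈ A := (hcover a).resolve_right (not_or.mpr ⟨haB, haC⟩)
  have hbB : b ∈ B := ((hcover b).resolve_left hbA).resolve_right hbC
  have hcC : c ∈ C := ((hcover c).resolve_left hcA).resolve_left hcB
  have hBC : B ⊓ C ≤ A := inf_le_of_forall_mem_or hcover haA haB haC
  have hcover' : ∀ x, x ∈ A ∨ x ∈ C ∨ x ∈ B := fun x => (hcover x).imp_right Or.symm
  have hCB : C ⊓ B ≤ A := inf_comm B C ▸ hBC
  rw [index_eq_two_iff_exists_notMem_and]
  refine ⟨c, hcA, fun x => or_iff_not_imp_right.mpr fun hxA => ?_⟩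
  rcases (hcover x).resolve_left hxA with hxB | hxC
  · exact mul_mem_of_forall_mem_or hcover hBC hxB hxA hcC hcB
  · have hxb : x * b ∈ A := mul_mem_of_forall_mem_or hcover' hCB hxC hxA hbB hbC
    have hcb : c⁻¹ * b ∈ A :=
      mul_mem_of_forall_mem_or hcover' hCB (inv_mem hcC) (inv_mem_iff.not.mpr hcA) hbB hbC
    have hxc : x * b * (c⁻¹ * b)⁻¹ = x * c := by group
    exact hxc ▸ mul_mem hxb (inv_mem hcb)

end Subgroup

theorem scorza_index_two_general
    (G : Type*) [Group G] (A B C : Subgroup G)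
    (hA : A ≠ ⊤) (hB : B ≠ ⊤) (hC : C ≠ ⊤)
    (hcover : (A : Set G) ∪ (B : Set G) ∪ (C : Set G) = Set.univ) :
    A.index = 2 ∧ B.index = 2 ∧ C.index = 2 := by
  have hmem : ∀ x, x ∈ A ∨ x ∈ B ∨ x ∈ C := fun x => by
    have hx : x ∈ (A : Set G) ∪ B ∪ C := hcover ▸ Set.mem_univ x
    simpa [or_assoc] using hx
  refine ⟨Subgroup.index_eq_two_of_forall_mem_or hmem hA hB hC,
    Subgroup.index_eq_two_of_forall_mem_or (fun x => ?_) hB hA hC,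
    Subgroup.index_eq_two_of_forall_mem_or (fun x => ?_) hC hA hB⟩ <;>
  · have := hmem x
    tauto

/-- Scorza's theorem, one direction: if a group `G` is the union of three
pairwise distinct proper subgroups `A`, `B`, `C`, then `A`, `B`, `C` each have
index 2 in `G`. -/
theorem scorza_index_two
    (G : Type*) [Group G] (A B C : Subgroup G)
    (hA : A ≠ ⊤) (hB : B ≠ ⊤) (hC : C ≠ ⊤)
    (hAB : A ≠ B) (hAC : A ≠ C) (hBC : B ≠ C)
    (hcover : (A : Set G) ∪ (B : Set G) ∪ (C : Set G) = Set.univ) :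
    A.index = 2 ∧ B.index = 2 ∧ C.index = 2 :=
  scorza_index_two_general G A B C hA hB hC hcover
end

section
/- (Scorza's theorem, quotient form) If a group G is the union of three pairwise distinct proper subgroups A, B, C, then G/(A ∩ B ∩ C) is isomorphic to the Klein four group Z/2 × Z/2 (in particular A ∩ B ∩ C is a normal subgroup of G of index 4). -/
/-!
By Scorza's argument every member of the cover has index two: if `a` lies in `A` but in neither
`B` nor `C` (such an `a` exists because a group is never the union of two proper subgroups), then
left multiplication by `a` swaps `B \ A` and `C \ A`, which forces `x * y ∈ A` for all
`x, y ∉ A`. The same element shows `B ⊓ C ≤ A`, so `A ⊓ B ⊓ C = A ⊓ B` is the kernel of the pair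
of sign characters of `A` and `B`, and two distinct index-two subgroups make that pair surjective.
-/

namespace Subgroup

variable {G : Type*} [Group G] {A B C H : Subgroup G} {a x y : G}

theorem exists_mem_notMem_notMem_of_cover (hcover : ∀ g, g ∈ A ∨ g ∈ B ∨ g ∈ C)
    (hB : B ≠ ⊤) (hC : C ≠ ⊤) : ∃ a ∈ A, a ∉ B ∧ a ∉ C := by
  by_contra! h
  have hsub : ((⊤ : Subgroup G) : Set G) ⊆ B ∪ C := fun g _ => by
    rcases hcover g with hg | hg | hg
    · by_cases hgB : g ∈ B
      exacts [Or.inl hgB, Or.inr (h g hg hgB)]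
    exacts [Or.inl hg, Or.inr hg]
  rcases SubgroupClass.subset_union.1 hsub with h | h
  exacts [hB (top_le_iff.1 h), hC (top_le_iff.1 h)]

theorem inf_le_of_cover_of_mem (hcover : ∀ g, g ∈ A ∨ g ∈ B ∨ g ∈ C)
    (ha : a ∈ A) (haB : a ∉ B) (haC : a ∉ C) : B ⊓ C ≤ A := fun g hg => by
  obtain ⟨hgB, hgC⟩ := mem_inf.1 hg
  rcases hcover (a * g) with h | h | h
  · exact (mul_mem_cancel_left ha).1 h
  · exact absurd ((mul_mem_cancel_right hgB).1 h) haB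
  · exact absurd ((mul_mem_cancel_right hgC).1 h) haC

theorem mul_mem_of_cover_of_mem_of_mem (hcover : ∀ g, g ∈ A ∨ g ∈ B ∨ g ∈ C)
    (hxB : x ∈ B) (hxC : x ∉ C) (hyC : y ∈ C) (hyB : y ∉ B) : x * y ∈ A := by
  rcases hcover (x * y) with h | h | h
  · exact h
  · exact absurd ((mul_mem_cancel_left hxB).1 h) hyB
  · exact absurd ((mul_mem_cancel_right hyC).1 h) hxC

theorem mul_mem_of_cover_of_notMem_of_mem (hcover : ∀ g, g ∈ A ∨ g ∈ B ∨ g ∈ C)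
    (ha : a ∈ A) (haB : a ∉ B) (haC : a ∉ C)
    (hxA : x ∉ A) (hyA : y ∉ A) (hxB : x ∈ B) (hyB : y ∈ B) : x * y ∈ A := by
  have shift : ∀ z ∈ B, z ∉ A → a * z ∈ C := fun z hzB hzA => by
    rcases hcover (a * z) with h | h | h
    · exact absurd ((mul_mem_cancel_left ha).1 h) hzA
    · exact absurd ((mul_mem_cancel_right hzB).1 h) haB
    · exact h
  have hxy : (a * x⁻¹)⁻¹ * (a * y) ∈ C :=
    mul_mem (inv_mem (shift x⁻¹ (inv_mem hxB) (inv_mem_iff.not.2 hxA))) (shift y hyB hyA)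
  simp only [mul_inv_rev, inv_inv, mul_assoc, inv_mul_cancel_left] at hxy
  exact inf_le_of_cover_of_mem hcover ha haB haC ⟨mul_mem hxB hyB, hxy⟩

theorem mul_mem_of_cover_of_notMem (hcover : ∀ g, g ∈ A ∨ g ∈ B ∨ g ∈ C)
    (ha : a ∈ A) (haB : a ∉ B) (haC : a ∉ C) (hxA : x ∉ A) (hyA : y ∉ A) : x * y ∈ A := by
  have hcover' : ∀ g, g ∈ A ∨ g ∈ C ∨ g ∈ B := fun g => (hcover g).imp_right Or.symm
  rcases (hcover x).resolve_left hxA with hxB | hxC <;>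
    rcases (hcover y).resolve_left hyA with hyB | hyC
  · exact mul_mem_of_cover_of_notMem_of_mem hcover ha haB haC hxA hyA hxB hyB
  · by_cases hyB : y ∈ B
    · exact mul_mem_of_cover_of_notMem_of_mem hcover ha haB haC hxA hyA hxB hyB
    by_cases hxC : x ∈ C
    · exact mul_mem_of_cover_of_notMem_of_mem hcover' ha haC haB hxA hyA hxC hyC
    exact mul_mem_of_cover_of_mem_of_mem hcover hxB hxC hyC hyB
  · by_cases hxB : x ∈ B
    · exact mul_mem_of_cover_of_notMem_of_mem hcover ha haB haC hxA hyA hxB hyB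
    by_cases hyC : y ∈ C
    · exact mul_mem_of_cover_of_notMem_of_mem hcover' ha haC haB hxA hyA hxC hyC
    exact mul_mem_of_cover_of_mem_of_mem hcover' hxC hxB hyB hyC
  · exact mul_mem_of_cover_of_notMem_of_mem hcover' ha haC haB hxA hyA hxC hyC

theorem index_eq_two_of_cover (hcover : ∀ g, g ∈ A ∨ g ∈ B ∨ g ∈ C)
    (hA : A ≠ ⊤) (hB : B ≠ ⊤) (hC : C ≠ ⊤) : A.index = 2 := by
  obtain ⟨a, ha, haB, haC⟩ := exists_mem_notMem_notMem_of_cover hcover hB hC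
  obtain ⟨x, hx⟩ : ∃ x, x ∉ A := by simpa [eq_top_iff'] using hA
  exact index_eq_two_iff_exists_notMem_and'.2
    ⟨x, hx, fun y => or_iff_not_imp_right.2 (mul_mem_of_cover_of_notMem hcover ha haB haC hx)⟩

theorem inf_le_of_cover (hcover : ∀ g, g ∈ A ∨ g ∈ B ∨ g ∈ C) (hB : B ≠ ⊤) (hC : C ≠ ⊤) :
    B ⊓ C ≤ A := by
  obtain ⟨a, ha, haB, haC⟩ := exists_mem_notMem_notMem_of_cover hcover hB hC
  exact inf_le_of_cover_of_mem hcover ha haB haC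

theorem not_le_of_index_eq_two (hA : A.index = 2) (hB : B.index = 2) (hAB : A ≠ B) : ¬A ≤ B :=
  fun hle =>
    have : A.FiniteIndex := ⟨by omega⟩
    (index_strictAnti (lt_of_le_of_ne hle hAB)).ne (hB.trans hA.symm)

noncomputable def indexTwoChar (h : H.index = 2) : G →* Multiplicative (ZMod 2) :=
  have := normal_of_index_eq_two h
  (mulEquivOfPrimeCardEq (H.index_eq_card.symm.trans h) (by simp)).toMonoidHom.comp
    (QuotientGroup.mk' H)

theorem ker_indexTwoChar (h : H.index = 2) : (indexTwoChar h).ker = H := by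
  have := normal_of_index_eq_two h
  rw [indexTwoChar, MonoidHom.ker_comp_of_injective _ _ (MulEquiv.injective _),
    QuotientGroup.ker_mk']

theorem indexTwoChar_apply_of_mem (h : H.index = 2) {g : G} (hg : g ∈ H) :
    indexTwoChar h g = 1 := by
  rwa [← MonoidHom.mem_ker, ker_indexTwoChar]

theorem indexTwoChar_apply_of_notMem (h : H.index = 2) {g : G} (hg : g ∉ H) :
    indexTwoChar h g = Multiplicative.ofAdd 1 := by
  have hne : indexTwoChar h g ≠ 1 := by rwa [ne_eq, ← MonoidHom.mem_ker, ker_indexTwoChar]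
  generalize indexTwoChar h g = z at hne
  revert z
  decide

theorem surjective_prod_indexTwoChar (hA : A.index = 2) (hB : B.index = 2) (hAB : A ≠ B) :
    Function.Surjective ((indexTwoChar hA).prod (indexTwoChar hB)) := by
  obtain ⟨g, hgA, hgB⟩ := SetLike.not_le_iff_exists.1 (not_le_of_index_eq_two hA hB hAB)
  obtain ⟨h, hhB, hhA⟩ := SetLike.not_le_iff_exists.1 (not_le_of_index_eq_two hB hA hAB.symm)
  have two_values : ∀ z : Multiplicative (ZMod 2), z = 1 ∨ z = Multiplicative.ofAdd 1 := by decide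
  rintro ⟨u, v⟩
  rcases two_values u with rfl | rfl <;> rcases two_values v with rfl | rfl
  · exact ⟨1, by simp⟩
  · exact ⟨g, by simp [indexTwoChar_apply_of_mem, indexTwoChar_apply_of_notMem, *]⟩
  · exact ⟨h, by simp [indexTwoChar_apply_of_mem, indexTwoChar_apply_of_notMem, *]⟩
  · have hhgA : h * g ∉ A := fun hm => hhA ((mul_mem_cancel_right hgA).1 hm)
    have hhgB : h * g ∉ B := fun hm => hgB ((mul_mem_cancel_left hhB).1 hm)
    exact ⟨h * g, by simp [indexTwoChar_apply_of_notMem, *]⟩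

end Subgroup

open Subgroup in
theorem scorza_quotient_klein_four_general
    (G : Type*) [Group G] (A B C : Subgroup G)
    (hA : A ≠ ⊤) (hB : B ≠ ⊤) (hC : C ≠ ⊤)
    (hAB : A ≠ B)
    (hcover : (A : Set G) ∪ (B : Set G) ∪ (C : Set G) = Set.univ) :
    ∃ f : G →* Multiplicative (ZMod 2) × Multiplicative (ZMod 2),
      Function.Surjective f ∧ f.ker = A ⊓ B ⊓ C := by
  have hmem : ∀ g, g ∈ A ∨ g ∈ B ∨ g ∈ C := fun g => by
    simpa [or_assoc] using Set.eq_univ_iff_forall.1 hcover g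
  have hA2 := index_eq_two_of_cover hmem hA hB hC
  have hB2 := index_eq_two_of_cover (fun g => (hmem g).rotate) hB hC hA
  have hABC : A ⊓ B ≤ C := inf_le_of_cover (fun g => (hmem g).rotate.rotate) hA hB
  refine ⟨(indexTwoChar hA2).prod (indexTwoChar hB2), surjective_prod_indexTwoChar hA2 hB2 hAB, ?_⟩
  rw [MonoidHom.ker_prod, ker_indexTwoChar, ker_indexTwoChar, inf_eq_left.2 hABC]

/-- Scorza's theorem, quotient form: if a group `G` is the union of three
pairwise distinct proper subgroups `A`, `B`, `C`, then `A ⊓ B ⊓ C` is a normal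
subgroup of `G` and the quotient `G/(A ⊓ B ⊓ C)` is isomorphic to the Klein
four group `ℤ/2 × ℤ/2`.  We phrase this via a surjective homomorphism onto the
Klein four group with kernel `A ⊓ B ⊓ C`. -/
theorem scorza_quotient_klein_four
    (G : Type*) [Group G] (A B C : Subgroup G)
    (hA : A ≠ ⊤) (hB : B ≠ ⊤) (hC : C ≠ ⊤)
    (hAB : A ≠ B) (hAC : A ≠ C) (hBC : B ≠ C)
    (hcover : (A : Set G) ∪ (B : Set G) ∪ (C : Set G) = Set.univ) :
    ∃ f : G →* Multiplicative (ZMod 2) × Multiplicative (ZMod 2),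
      Function.Surjective f ∧ f.ker = A ⊓ B ⊓ C :=
  scorza_quotient_klein_four_general G A B C hA hB hC hAB hcover
end

section
/- The polynomial ring ℤ[x] is the union of the three proper subrings S₁ = {f : f(0) is even}, S₂ = {f : f(1) is even}, and S₃ = {f : f(0) + f(1) is even}. -/
open Polynomial

/-!
Reduce `f ↦ (f(0), f(1))` modulo 2 to a ring map `ℤ[X] → 𝔽₂ × 𝔽₂`. Then `S₁` and `S₂` are the
preimages of the coordinate axes and `S₃` the preimage of the diagonal, all of which are
(non-unital) subrings; and every vector of `𝔽₂²` has a zero coordinate or two equal ones.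
-/

theorem NonUnitalSubring.ne_top_of_notMem {R : Type*} [NonUnitalNonAssocRing R]
    {S : NonUnitalSubring R} {x : R} (hx : x ∉ S) : S ≠ ⊤ :=
  fun h => hx (h ▸ mem_top x)

section

variable {R : Type*} [Ring R]

def evenLocus (φ : R →+* ℤ) : NonUnitalSubring R where
  carrier := {x | Even (φ x)}
  add_mem' hx hy := by simpa only [Set.mem_ofPred_eq, map_add] using hx.add hy
  zero_mem' := by simp
  neg_mem' hx := by simpa only [Set.mem_ofPred_eq, map_neg, even_neg] using hx
  mul_mem' hx _ := by simpa only [Set.mem_ofPred_eq, map_mul] using hx.mul_right _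

@[simp]
theorem mem_evenLocus {φ : R →+* ℤ} {x : R} : x ∈ evenLocus φ ↔ Even (φ x) := Iff.rfl

def evenSumLocus (φ ψ : R →+* ℤ) : Subring R where
  carrier := {x | Even (φ x + ψ x)}
  add_mem' {x y} hx hy := by
    simpa only [Set.mem_ofPred_eq, map_add, add_add_add_comm] using hx.add hy
  zero_mem' := by simp
  one_mem' := by simp
  neg_mem' hx := by simpa only [Set.mem_ofPred_eq, map_neg, ← neg_add, even_neg] using hx
  mul_mem' hx hy := by
    simp only [Set.mem_ofPred_eq, map_mul, Int.even_add, Int.even_mul] at hx hy ⊢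
    tauto

@[simp]
theorem mem_evenSumLocus {φ ψ : R →+* ℤ} {x : R} :
    x ∈ evenSumLocus φ ψ ↔ Even (φ x + ψ x) := Iff.rfl

theorem evenLocus_ne_top (φ : R →+* ℤ) : evenLocus φ ≠ ⊤ :=
  NonUnitalSubring.ne_top_of_notMem (x := 1) (by simp)

theorem evenLocus_union_evenLocus_union_evenSumLocus (φ ψ : R →+* ℤ) :
    (evenLocus φ : Set R) ∪ evenLocus ψ ∪ evenSumLocus φ ψ = Set.univ := by
  refine Set.eq_univ_of_forall fun x => ?_
  simp only [Set.mem_union, SetLike.mem_coe, mem_evenLocus, mem_evenSumLocus, Int.even_add]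
  tauto

end

/-- The polynomial ring `ℤ[X]` is the union of the three proper subrings
`S₁ = {f : f(0) even}`, `S₂ = {f : f(1) even}`, `S₃ = {f : f(0)+f(1) even}`. -/
theorem int_poly_union_of_three_proper_subrings :
    ∃ S₁ S₂ S₃ : NonUnitalSubring (Polynomial ℤ),
      (S₁ : Set (Polynomial ℤ)) = {f | Even (f.eval 0)} ∧
      (S₂ : Set (Polynomial ℤ)) = {f | Even (f.eval 1)} ∧
      (S₃ : Set (Polynomial ℤ)) = {f | Even (f.eval 0 + f.eval 1)} ∧
      S₁ ≠ ⊤ ∧ S₂ ≠ ⊤ ∧ S₃ ≠ ⊤ ∧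
      (S₁ : Set (Polynomial ℤ)) ∪ (S₂ : Set (Polynomial ℤ)) ∪ (S₃ : Set (Polynomial ℤ)) =
        Set.univ :=
  ⟨evenLocus (evalRingHom 0), evenLocus (evalRingHom 1),
    (evenSumLocus (evalRingHom 0) (evalRingHom 1)).toNonUnitalSubring, rfl, rfl, rfl,
    evenLocus_ne_top _, evenLocus_ne_top _,
    NonUnitalSubring.ne_top_of_notMem (x := X)
      (show X ∉ evenSumLocus (evalRingHom 0) (evalRingHom 1) by simp),
    evenLocus_union_evenLocus_union_evenSumLocus _ _⟩
end

section
/- If a ring R is the union of three proper subrings S₁, S₂, S₃ such that no nonzero two-sided ideal of R is contained in S₁ ∩ S₂ ∩ S₃, then 2r = 0 for every r ∈ R. -/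
/-!
If a group `G` is the union of proper subgroups `A`, `B`, `C`, pick `a ∈ A \ (B ∪ C)`, which
exists because no group is the union of two proper subgroups. For `g ∈ B \ A`, the element
`a + g` is forced into `C`, hence `g ∉ C`, and then `a + g + g` can only lie in `A`; so
`g + g ∈ A`. Thus `g + g` lies in every `Sᵢ` for all `g ∈ R`, and the doubles form a two-sided
ideal inside `S₁ ∩ S₂ ∩ S₃`, which must therefore vanish.
-/

namespace AddSubgroup

variable {G : Type*} [AddGroup G]

theorem exists_notMem_and_notMem {B C : AddSubgroup G} (hB : B ≠ ⊤) (hC : C ≠ ⊤) :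
    ∃ g, g ∉ B ∧ g ∉ C := by
  by_contra! h
  have hcover : ((⊤ : AddSubgroup G) : Set G) ⊆ B ∪ C := fun g _ ↦ or_iff_not_imp_left.2 (h g)
  rcases AddSubgroupClass.subset_union.1 hcover with hle | hle
  · exact hB (top_le_iff.1 hle)
  · exact hC (top_le_iff.1 hle)

variable {A B C : AddSubgroup G}

theorem add_self_mem_of_mem_of_notMem (hcover : ∀ g, g ∈ A ∨ g ∈ B ∨ g ∈ C)
    {a : G} (haA : a ∈ A) (haB : a ∉ B) (haC : a ∉ C) {g : G} (hgB : g ∈ B) (hgA : g ∉ A) :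
    g + g ∈ A := by
  have hagC : a + g ∈ C := by
    rcases hcover (a + g) with h | h | h
    · exact absurd ((A.add_mem_cancel_left haA).1 h) hgA
    · exact absurd ((B.add_mem_cancel_right hgB).1 h) haB
    · exact h
  have hgC : g ∉ C := fun hgC ↦ haC ((C.add_mem_cancel_right hgC).1 hagC)
  rcases hcover (a + (g + g)) with h | h | h
  · exact (A.add_mem_cancel_left haA).1 h
  · exact absurd ((B.add_mem_cancel_right (B.add_mem hgB hgB)).1 h) haB
  · rw [← add_assoc] at h
    exact absurd ((C.add_mem_cancel_left hagC).1 h) hgC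

theorem add_self_mem_of_cover (hcover : ∀ g, g ∈ A ∨ g ∈ B ∨ g ∈ C)
    (hB : B ≠ ⊤) (hC : C ≠ ⊤) (g : G) : g + g ∈ A := by
  obtain ⟨a, haB, haC⟩ := exists_notMem_and_notMem hB hC
  have haA : a ∈ A := by have := hcover a; tauto
  by_cases hgA : g ∈ A
  · exact A.add_mem hgA hgA
  rcases hcover g with hg | hg | hg
  · exact absurd hg hgA
  · exact add_self_mem_of_mem_of_notMem hcover haA haB haC hg hgA
  · exact add_self_mem_of_mem_of_notMem (fun x ↦ by have := hcover x; tauto) haA haC haB hg hgA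

end AddSubgroup

namespace TwoSidedIdeal

variable (R : Type*) [NonUnitalRing R]

def doubles : TwoSidedIdeal R :=
  .mk' (Set.range fun r : R ↦ r + r) ⟨0, add_zero 0⟩
    (fun ⟨s, hs⟩ ⟨t, ht⟩ ↦ ⟨s + t, by rw [← hs, ← ht]; exact add_add_add_comm s t s t⟩)
    (fun ⟨s, hs⟩ ↦ ⟨-s, by rw [← hs, neg_add]⟩)
    (fun {x _} ⟨s, hs⟩ ↦ ⟨x * s, by rw [← hs, mul_add]⟩)
    (fun {_ y} ⟨s, hs⟩ ↦ ⟨s * y, by rw [← hs, add_mul]⟩)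

variable {R}

theorem add_self_mem_doubles (r : R) : r + r ∈ doubles R :=
  (mem_mk' ..).2 ⟨r, rfl⟩

theorem coe_doubles : (doubles R : Set R) = Set.range fun r : R ↦ r + r :=
  Set.ext (mem_mk' _ _ _ _ _ _)

end TwoSidedIdeal

/-- If a (not necessarily unital) ring `R` is the union of three proper
subrings `S₁, S₂, S₃` such that no nonzero two-sided ideal of `R` is contained
in `S₁ ∩ S₂ ∩ S₃`, then `2r = 0` for every `r ∈ R`. -/
theorem char_two_of_good_cover
    (R : Type*) [NonUnitalRing R] (S₁ S₂ S₃ : NonUnitalSubring R)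
    (h₁ : S₁ ≠ ⊤) (h₂ : S₂ ≠ ⊤) (h₃ : S₃ ≠ ⊤)
    (hcover : ∀ r : R, r ∈ S₁ ∨ r ∈ S₂ ∨ r ∈ S₃)
    (hideal : ∀ I : TwoSidedIdeal R,
      (I : Set R) ⊆ ((S₁ ⊓ S₂ ⊓ S₃ : NonUnitalSubring R) : Set R) → I = ⊥) :
    ∀ r : R, r + r = 0 := by
  have hne : ∀ {S : NonUnitalSubring R}, S ≠ ⊤ → S.toAddSubgroup ≠ ⊤ :=
    fun h ↦ NonUnitalSubring.toAddSubgroup_eq_top.not.2 h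
  have hmem₁ := AddSubgroup.add_self_mem_of_cover (A := S₁.toAddSubgroup) hcover (hne h₂) (hne h₃)
  have hmem₂ := AddSubgroup.add_self_mem_of_cover (A := S₂.toAddSubgroup)
    (fun r ↦ by have := hcover r; tauto) (hne h₁) (hne h₃)
  have hmem₃ := AddSubgroup.add_self_mem_of_cover (A := S₃.toAddSubgroup)
    (fun r ↦ by have := hcover r; tauto) (hne h₁) (hne h₂)
  have hdoubles : TwoSidedIdeal.doubles R = ⊥ := by
    refine hideal _ ?_
    rw [TwoSidedIdeal.coe_doubles]
    rintro _ ⟨r, rfl⟩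
    exact ⟨⟨hmem₁ r, hmem₂ r⟩, hmem₃ r⟩
  intro r
  simpa [hdoubles] using TwoSidedIdeal.add_self_mem_doubles r
end

section
/- If a ring R is the union of three proper subrings S₁, S₂, S₃ such that no nonzero two-sided ideal of R is contained in S := S₁ ∩ S₂ ∩ S₃, then |R| ∈ {4, 8, 16}; in particular R is finite. -/
/-!
Three proper subgroups covering a group meet pairwise in `T = S₁ ∩ S₂ ∩ S₃`; each has index 2
and `T` has index 4, so `|R| = 4 |T|`, and `T` has index 2 in `S₁`.

An additive endomorphism of `R` preserving each `Sᵢ` acts on `R / T ≅ (ℤ/2)²` preserving its three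
lines, so it is either zero or the identity there. For `a ∈ S₁ \ S₂`, applying this to `r ↦ r * s`
and `r ↦ s * r` shows that `{s ∈ T | a * s ∈ T, s * a ∈ T}` is a two-sided ideal of `R`, hence
zero. Thus `s ↦ (a * s, s * a)` embeds `T` into `(S₁ / T)²`, and `|T|` divides 4.
-/

open Set

namespace AddSubgroup

variable {G : Type*} [AddGroup G] {H₁ H₂ H₃ : AddSubgroup G}

theorem add_mem_of_cover (hcover : ∀ g, g ∈ H₁ ∨ g ∈ H₂ ∨ g ∈ H₃) {y z : G}
    (hy₁ : y ∈ H₁) (hy₂ : y ∉ H₂) (hz₂ : z ∈ H₂) (hz₁ : z ∉ H₁) : y + z ∈ H₃ :=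
  ((hcover _).resolve_left fun h => hz₁ ((H₁.add_mem_cancel_left hy₁).1 h)).resolve_left
    fun h => hy₂ ((H₂.add_mem_cancel_right hz₂).1 h)

theorem exists_mem_notMem_of_cover (hcover : ∀ g, g ∈ H₁ ∨ g ∈ H₂ ∨ g ∈ H₃)
    (h₂ : H₂ ≠ ⊤) (h₃ : H₃ ≠ ⊤) : ∃ a ∈ H₁, a ∉ H₂ ∧ a ∉ H₃ := by
  obtain ⟨x, hx⟩ := SetLike.exists_not_mem_of_ne_top H₂ h₂
  obtain ⟨y, hy⟩ := SetLike.exists_not_mem_of_ne_top H₃ h₃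
  by_contra! h
  have hcover' : ∀ g, g ∈ H₂ ∨ g ∈ H₃ := fun g => by
    rcases hcover g with hg | hg | hg
    exacts [or_iff_not_imp_left.2 (h g hg), Or.inl hg, Or.inr hg]
  rcases hcover' (x + y) with hxy | hxy
  · exact hx ((H₂.add_mem_cancel_right ((hcover' y).resolve_right hy)).1 hxy)
  · exact hy ((H₃.add_mem_cancel_left ((hcover' x).resolve_left hx)).1 hxy)

theorem inf_le_of_cover (hcover : ∀ g, g ∈ H₁ ∨ g ∈ H₂ ∨ g ∈ H₃)
    (h₁ : H₁ ≠ ⊤) (h₂ : H₂ ≠ ⊤) : H₁ ⊓ H₂ ≤ H₃ := by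
  obtain ⟨c, hc₃, hc₁, hc₂⟩ :=
    exists_mem_notMem_of_cover (fun g => (hcover g).rotate.rotate) h₁ h₂
  rintro x ⟨hx₁, hx₂⟩
  rcases hcover (x + c) with h | h | h
  · exact absurd ((H₁.add_mem_cancel_left hx₁).1 h) hc₁
  · exact absurd ((H₂.add_mem_cancel_left hx₂).1 h) hc₂
  · exact (H₃.add_mem_cancel_right hc₃).1 h

theorem index_eq_two_of_cover (hcover : ∀ g, g ∈ H₁ ∨ g ∈ H₂ ∨ g ∈ H₃)
    (h₁ : H₁ ≠ ⊤) (h₂ : H₂ ≠ ⊤) (h₃ : H₃ ≠ ⊤) : H₁.index = 2 := by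
  obtain ⟨a, ha₁, ha₂, -⟩ := exists_mem_notMem_of_cover hcover h₂ h₃
  obtain ⟨b, hb₂, hb₃, hb₁⟩ := exists_mem_notMem_of_cover (fun g => (hcover g).rotate) h₃ h₁
  have hH₃ : ∀ g ∈ H₃, g ∉ H₁ → g + b ∈ H₁ := fun g hg₃ hg₁ =>
    add_mem_of_cover (fun g => (hcover g).rotate.rotate.imp_right Or.symm) hg₃
      (fun hg₂ => hg₁ (inf_le_of_cover (fun g => (hcover g).rotate) h₂ h₃ ⟨hg₂, hg₃⟩)) hb₂ hb₃
  refine index_eq_two_iff_exists_notMem_and.2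
    ⟨b, hb₁, fun g => or_iff_not_imp_right.2 fun hg₁ => ?_⟩
  rcases (hcover g).resolve_left hg₁ with hg₂ | hg₃
  · have hag : a + g ∈ H₃ := add_mem_of_cover hcover ha₁ ha₂ hg₂ hg₁
    have := hH₃ _ hag fun h => hg₁ ((H₁.add_mem_cancel_left ha₁).1 h)
    rwa [add_assoc, H₁.add_mem_cancel_left ha₁] at this
  · exact hH₃ g hg₃ hg₁

theorem relIndex_inf_eq_two {H K : AddSubgroup G} (hH : H.index = 2) (hK : K.index = 2)
    (hHK : ¬ H ≤ K) : (H ⊓ K).relIndex H = 2 := by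
  have hmul := relIndex_mul_index (inf_le_left : H ⊓ K ≤ H)
  have hle : (H ⊓ K).index ≤ H.index * K.index := index_inf_le
  have hne_zero : (H ⊓ K).index ≠ 0 := index_inf_ne_zero (by omega) (by omega)
  have hne_one : (H ⊓ K).relIndex H ≠ 1 := fun h =>
    hHK ((relIndex_eq_one.1 h).trans inf_le_right)
  rw [hH, hK] at hle
  rw [hH] at hmul
  omega

theorem relIndex_inf_inf_of_cover (hcover : ∀ g, g ∈ H₁ ∨ g ∈ H₂ ∨ g ∈ H₃)
    (h₁ : H₁ ≠ ⊤) (h₂ : H₂ ≠ ⊤) (h₃ : H₃ ≠ ⊤) : (H₁ ⊓ H₂ ⊓ H₃).relIndex H₁ = 2 := by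
  obtain ⟨a, ha₁, ha₂, -⟩ := exists_mem_notMem_of_cover hcover h₂ h₃
  rw [inf_of_le_left (inf_le_of_cover hcover h₁ h₂)]
  exact relIndex_inf_eq_two (index_eq_two_of_cover hcover h₁ h₂ h₃)
    (index_eq_two_of_cover (fun g => or_left_comm.1 (hcover g)) h₂ h₁ h₃) fun h => ha₂ (h ha₁)

theorem index_inf_inf_of_cover (hcover : ∀ g, g ∈ H₁ ∨ g ∈ H₂ ∨ g ∈ H₃)
    (h₁ : H₁ ≠ ⊤) (h₂ : H₂ ≠ ⊤) (h₃ : H₃ ≠ ⊤) : (H₁ ⊓ H₂ ⊓ H₃).index = 4 := by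
  rw [← relIndex_mul_index (inf_le_left.trans inf_le_left),
    relIndex_inf_inf_of_cover hcover h₁ h₂ h₃, index_eq_two_of_cover hcover h₁ h₂ h₃]

theorem map_mem_inf_inf_of_cover (hcover : ∀ g, g ∈ H₁ ∨ g ∈ H₂ ∨ g ∈ H₃)
    (h₁ : H₁ ≠ ⊤) (h₂ : H₂ ≠ ⊤) (h₃ : H₃ ≠ ⊤) {f : G →+ G}
    (hf₂ : MapsTo f H₂ H₂) (hf₃ : MapsTo f H₃ H₃) {x : G} (hx₁ : x ∈ H₁) (hx₂ : x ∉ H₂)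
    (hfx₂ : f x ∈ H₂) (hfx₃ : f x ∈ H₃) (g : G) : f g ∈ H₁ ⊓ H₂ ⊓ H₃ := by
  have hx₃ : x ∉ H₃ := fun h =>
    hx₂ (inf_le_of_cover (fun g => (hcover g).imp_right Or.symm) h₁ h₃ ⟨hx₁, h⟩)
  have h₂₃ : H₂ ⊓ H₃ ≤ H₁ := inf_le_of_cover (fun g => (hcover g).rotate) h₂ h₃
  have hout : ∀ g ∉ H₁, f g ∈ H₁ ⊓ H₂ ⊓ H₃ := by
    intro g hg₁
    suffices f g ∈ H₂ ⊓ H₃ from ⟨⟨h₂₃ this, this.1⟩, this.2⟩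
    rcases (hcover g).resolve_left hg₁ with hg₂ | hg₃
    · have hxg := hf₃ (add_mem_of_cover hcover hx₁ hx₂ hg₂ hg₁)
      rw [SetLike.mem_coe, map_add, H₃.add_mem_cancel_left hfx₃] at hxg
      exact ⟨hf₂ hg₂, hxg⟩
    · have hxg := hf₂ (add_mem_of_cover (fun g => (hcover g).imp_right Or.symm) hx₁ hx₃ hg₃ hg₁)
      rw [SetLike.mem_coe, map_add, H₂.add_mem_cancel_left hfx₂] at hxg
      exact ⟨hxg, hf₃ hg₃⟩
  by_cases hg₁ : g ∈ H₁
  · obtain ⟨b, hb⟩ := SetLike.exists_not_mem_of_ne_top H₁ h₁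
    have := sub_mem (hout (g + b) fun h => hb ((H₁.add_mem_cancel_left hg₁).1 h)) (hout b hb)
    rwa [← map_sub, add_sub_cancel_right] at this
  · exact hout g hg₁

end AddSubgroup

namespace NonUnitalSubring

variable {R : Type*} [NonUnitalRing R] {S₁ S₂ S₃ : NonUnitalSubring R}

theorem toAddSubgroup_inf (S S' : NonUnitalSubring R) :
    (S ⊓ S').toAddSubgroup = S.toAddSubgroup ⊓ S'.toAddSubgroup :=
  rfl

theorem mul_mem_inf_inf_of_cover_left (hcover : ∀ r, r ∈ S₁ ∨ r ∈ S₂ ∨ r ∈ S₃)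
    (h₁ : S₁ ≠ ⊤) (h₂ : S₂ ≠ ⊤) (h₃ : S₃ ≠ ⊤) {s x : R} (hs : s ∈ S₁ ⊓ S₂ ⊓ S₃)
    (hx₁ : x ∈ S₁) (hx₂ : x ∉ S₂) (hxs : x * s ∈ S₁ ⊓ S₂ ⊓ S₃) (r : R) :
    r * s ∈ S₁ ⊓ S₂ ⊓ S₃ :=
  AddSubgroup.map_mem_inf_inf_of_cover (f := AddMonoidHom.mulRight s) hcover
    (mt toAddSubgroup_eq_top.1 h₁) (mt toAddSubgroup_eq_top.1 h₂) (mt toAddSubgroup_eq_top.1 h₃)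
    (fun _ hr => S₂.mul_mem hr hs.1.2) (fun _ hr => S₃.mul_mem hr hs.2) hx₁ hx₂ hxs.1.2 hxs.2 r

theorem mul_mem_inf_inf_of_cover_right (hcover : ∀ r, r ∈ S₁ ∨ r ∈ S₂ ∨ r ∈ S₃)
    (h₁ : S₁ ≠ ⊤) (h₂ : S₂ ≠ ⊤) (h₃ : S₃ ≠ ⊤) {s x : R} (hs : s ∈ S₁ ⊓ S₂ ⊓ S₃)
    (hx₁ : x ∈ S₁) (hx₂ : x ∉ S₂) (hsx : s * x ∈ S₁ ⊓ S₂ ⊓ S₃) (r : R) :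
    s * r ∈ S₁ ⊓ S₂ ⊓ S₃ :=
  AddSubgroup.map_mem_inf_inf_of_cover (f := AddMonoidHom.mulLeft s) hcover
    (mt toAddSubgroup_eq_top.1 h₁) (mt toAddSubgroup_eq_top.1 h₂) (mt toAddSubgroup_eq_top.1 h₃)
    (fun _ hr => S₂.mul_mem hs.1.2 hr) (fun _ hr => S₃.mul_mem hs.2 hr) hx₁ hx₂ hsx.1.2 hsx.2 r

theorem eq_zero_of_mul_mem_inf_inf (hcover : ∀ r, r ∈ S₁ ∨ r ∈ S₂ ∨ r ∈ S₃)
    (h₁ : S₁ ≠ ⊤) (h₂ : S₂ ≠ ⊤) (h₃ : S₃ ≠ ⊤)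
    (hideal : ∀ I : TwoSidedIdeal R, (I : Set R) ⊆ (S₁ ⊓ S₂ ⊓ S₃ : NonUnitalSubring R) → I = ⊥)
    {a s : R} (ha₁ : a ∈ S₁) (ha₂ : a ∉ S₂) (hs : s ∈ S₁ ⊓ S₂ ⊓ S₃)
    (has : a * s ∈ S₁ ⊓ S₂ ⊓ S₃) (hsa : s * a ∈ S₁ ⊓ S₂ ⊓ S₃) : s = 0 := by
  set T := S₁ ⊓ S₂ ⊓ S₃ with hT
  have hcover' : ∀ r, r ∈ S₂ ∨ r ∈ S₁ ∨ r ∈ S₃ := fun r => or_left_comm.1 (hcover r)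
  have hswap : S₂ ⊓ S₁ ⊓ S₃ = T := by rw [hT, inf_comm S₂]
  obtain ⟨b, hb₂, hb₁, -⟩ := AddSubgroup.exists_mem_notMem_of_cover
    (H₁ := S₂.toAddSubgroup) hcover' (mt toAddSubgroup_eq_top.1 h₁) (mt toAddSubgroup_eq_top.1 h₃)
  have hT₁₂ : ∀ {x}, x ∈ S₁ → x ∈ S₂ → x ∈ T := fun hx₁ hx₂ =>
    ⟨⟨hx₁, hx₂⟩, AddSubgroup.inf_le_of_cover (H₃ := S₃.toAddSubgroup) hcover
      (mt toAddSubgroup_eq_top.1 h₁) (mt toAddSubgroup_eq_top.1 h₂) ⟨hx₁, hx₂⟩⟩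
  let P : R → Prop := fun s => s ∈ T ∧ a * s ∈ T ∧ s * a ∈ T
  have hleft : ∀ {s}, P s → ∀ r, r * s ∈ T := fun hs =>
    mul_mem_inf_inf_of_cover_left hcover h₁ h₂ h₃ hs.1 ha₁ ha₂ hs.2.1
  have hright : ∀ {s}, P s → ∀ r, s * r ∈ T := fun hs =>
    mul_mem_inf_inf_of_cover_right hcover h₁ h₂ h₃ hs.1 ha₁ ha₂ hs.2.2
  -- `b * (s * a) = (b * s) * a` lies in `S₁ ∩ S₂ ⊆ T`, so `b` can take over the role of `a`.
  have hleft' : ∀ {s}, P s → ∀ r, r * (s * a) ∈ T := by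
    intro s hs
    have hbsa : b * (s * a) ∈ T := hT₁₂ (mul_assoc b s a ▸ S₁.mul_mem (hleft hs b).1.1 ha₁)
      (S₂.mul_mem hb₂ hs.2.2.1.2)
    simpa only [hswap] using mul_mem_inf_inf_of_cover_left hcover' h₂ h₁ h₃
      (hswap ▸ hs.2.2) hb₂ hb₁ (hswap ▸ hbsa)
  have hright' : ∀ {s}, P s → ∀ r, a * s * r ∈ T := by
    intro s hs
    have hasb : a * s * b ∈ T := hT₁₂ ((mul_assoc a s b).symm ▸ S₁.mul_mem ha₁ (hright hs b).1.1)
      (S₂.mul_mem hs.2.1.1.2 hb₂)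
    simpa only [hswap] using mul_mem_inf_inf_of_cover_right hcover' h₂ h₁ h₃
      (hswap ▸ hs.2.1) hb₂ hb₁ (hswap ▸ hasb)
  let K : TwoSidedIdeal R := .mk' {s | P s}
    ⟨T.zero_mem, by simp, by simp⟩
    (fun hx hy => ⟨T.add_mem hx.1 hy.1, mul_add a _ _ ▸ T.add_mem hx.2.1 hy.2.1,
      add_mul _ _ a ▸ T.add_mem hx.2.2 hy.2.2⟩)
    (fun hx => ⟨T.neg_mem hx.1, (mul_neg a _).symm ▸ T.neg_mem hx.2.1,
      (neg_mul _ a).symm ▸ T.neg_mem hx.2.2⟩)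
    (fun {x _} hy => ⟨hleft hy x, mul_assoc a x _ ▸ hleft hy _,
      (mul_assoc x _ a).symm ▸ hleft' hy x⟩)
    (fun {_ y} hx => ⟨hright hx y, (mul_assoc a _ y) ▸ hright' hx y,
      (mul_assoc _ y a).symm ▸ hright hx _⟩)
  have hK : K = ⊥ := hideal K fun x hx => ((TwoSidedIdeal.mem_mk' ..).1 hx).1
  have hsK : s ∈ K := (TwoSidedIdeal.mem_mk' ..).2 ⟨hs, has, hsa⟩
  rwa [hK, TwoSidedIdeal.mem_bot] at hsK

theorem card_inf_inf_dvd_four (hcover : ∀ r, r ∈ S₁ ∨ r ∈ S₂ ∨ r ∈ S₃)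
    (h₁ : S₁ ≠ ⊤) (h₂ : S₂ ≠ ⊤) (h₃ : S₃ ≠ ⊤)
    (hideal : ∀ I : TwoSidedIdeal R, (I : Set R) ⊆ (S₁ ⊓ S₂ ⊓ S₃ : NonUnitalSubring R) → I = ⊥) :
    Nat.card (S₁ ⊓ S₂ ⊓ S₃ : NonUnitalSubring R) ∣ 4 := by
  set T := S₁ ⊓ S₂ ⊓ S₃
  have hH₁ := mt toAddSubgroup_eq_top.1 h₁
  have hH₂ := mt toAddSubgroup_eq_top.1 h₂
  have hH₃ := mt toAddSubgroup_eq_top.1 h₃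
  obtain ⟨a, ha₁, ha₂, -⟩ :=
    AddSubgroup.exists_mem_notMem_of_cover (H₁ := S₁.toAddSubgroup) hcover hH₂ hH₃
  let N := T.toAddSubgroup.addSubgroupOf S₁.toAddSubgroup
  have hN : Nat.card (S₁.toAddSubgroup ⧸ N) = 2 := by
    rw [← AddSubgroup.relIndex_inf_inf_of_cover hcover hH₁ hH₂ hH₃]
    rfl
  let φ : T.toAddSubgroup →+ (S₁.toAddSubgroup ⧸ N) × (S₁.toAddSubgroup ⧸ N) :=
    ((QuotientAddGroup.mk' N).comp
      (((AddMonoidHom.mulLeft a).comp T.toAddSubgroup.subtype).codRestrict _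
        fun s => S₁.mul_mem ha₁ s.2.1.1)).prod
    ((QuotientAddGroup.mk' N).comp
      (((AddMonoidHom.mulRight a).comp T.toAddSubgroup.subtype).codRestrict _
        fun s => S₁.mul_mem s.2.1.1 ha₁))
  have hφ : Function.Injective φ := by
    refine (injective_iff_map_eq_zero φ).2 fun s hs => Subtype.ext ?_
    have has : a * s ∈ T := (QuotientAddGroup.eq_zero_iff _).1 (congrArg Prod.fst hs)
    have hsa : s * a ∈ T := (QuotientAddGroup.eq_zero_iff _).1 (congrArg Prod.snd hs)
    exact eq_zero_of_mul_mem_inf_inf hcover h₁ h₂ h₃ hideal ha₁ ha₂ s.2 has hsa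
  have hdvd := AddSubgroup.card_dvd_of_injective φ hφ
  rwa [Nat.card_prod, hN] at hdvd

end NonUnitalSubring

/-- If a (not necessarily unital) ring `R` is the union of three proper
subrings `S₁, S₂, S₃` such that no nonzero two-sided ideal of `R` is contained
in `S₁ ∩ S₂ ∩ S₃`, then `R` has exactly 4, 8, or 16 elements (in particular
`R` is finite, so its `Nat.card` is nonzero). -/
theorem card_of_good_ring
    (R : Type*) [NonUnitalRing R] (S₁ S₂ S₃ : NonUnitalSubring R)
    (h₁ : S₁ ≠ ⊤) (h₂ : S₂ ≠ ⊤) (h₃ : S₃ ≠ ⊤)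
    (hcover : ∀ r : R, r ∈ S₁ ∨ r ∈ S₂ ∨ r ∈ S₃)
    (hideal : ∀ I : TwoSidedIdeal R,
      (I : Set R) ⊆ ((S₁ ⊓ S₂ ⊓ S₃ : NonUnitalSubring R) : Set R) → I = ⊥) :
    Nat.card R = 4 ∨ Nat.card R = 8 ∨ Nat.card R = 16 := by
  have hindex : (S₁ ⊓ S₂ ⊓ S₃).toAddSubgroup.index = 4 := by
    rw [NonUnitalSubring.toAddSubgroup_inf, NonUnitalSubring.toAddSubgroup_inf]
    exact AddSubgroup.index_inf_inf_of_cover (H₁ := S₁.toAddSubgroup) hcover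
      (mt NonUnitalSubring.toAddSubgroup_eq_top.1 h₁)
      (mt NonUnitalSubring.toAddSubgroup_eq_top.1 h₂)
      (mt NonUnitalSubring.toAddSubgroup_eq_top.1 h₃)
  have hcard : Nat.card R = Nat.card (S₁ ⊓ S₂ ⊓ S₃ : NonUnitalSubring R) * 4 :=
    hindex ▸ ((S₁ ⊓ S₂ ⊓ S₃).toAddSubgroup.card_mul_index).symm
  obtain ⟨i, hi, hT⟩ := (Nat.dvd_prime_pow (m := 2) Nat.prime_two).1
    (NonUnitalSubring.card_inf_inf_dvd_four hcover h₁ h₂ h₃ hideal)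
  rw [hcard, hT]
  interval_cases i <;> simp
end

section
/- Let R be a ring, S₁, S₂, S₃ proper subrings with R = S₁ ∪ S₂ ∪ S₃ and S = S₁ ∩ S₂ ∩ S₃ containing no nonzero ideal of R. Write (R,+) = S ⊕ {0, x, y, x+y} with (Sᵢ,+) = S ⊕ {0,x}, S ⊕ {0,y}, S ⊕ {0,x+y} respectively. Then for any s ∈ S: sx ∈ S if and only if sy ∈ S, and xs ∈ S if and only if ys ∈ S. -/
/-! Since `s * (x + y) = s * x + s * y`, the elements `s * x`, `s * y` and their sum lie in
`S₁`, `S₂`, `S₃`, so each lies in `S` or in the coset `S + x`, `S + y`, `S + (x + y)` respectively.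
If exactly one of `s * x`, `s * y` were in `S`, subtracting cosets would put `x` or `y` into `S`. -/

theorem AddSubgroup.mem_iff_mem_of_mem_union_image_add {G : Type*} [AddCommGroup G]
    (S : AddSubgroup G) {x y a b : G} (hx : x ∉ S) (hy : y ∉ S)
    (ha : a ∈ (S : Set G) ∪ (· + x) '' S) (hb : b ∈ (S : Set G) ∪ (· + y) '' S)
    (hab : a + b ∈ (S : Set G) ∪ (· + (x + y)) '' S) : a ∈ S ↔ b ∈ S := by
  simp only [Set.image_add_right, ← sub_eq_add_neg, Set.mem_union, Set.mem_preimage,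
    SetLike.mem_coe] at ha hb hab
  constructor
  · intro haS
    rcases hab with habS | habxy
    · simpa using S.sub_mem habS haS
    · refine hb.resolve_right fun hby => hx ?_
      -- `x = a + (b - y) - (a + b - (x + y))`
      convert S.sub_mem (S.add_mem haS hby) habxy using 1
      abel
  · intro hbS
    rcases hab with habS | habxy
    · simpa using S.sub_mem habS hbS
    · refine ha.resolve_right fun hax => hy ?_
      convert S.sub_mem (S.add_mem hbS hax) habxy using 1
      abel

theorem good_cover_lemma_one_general
    (R : Type*) [NonUnitalRing R] (S₁ S₂ S₃ : NonUnitalSubring R)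
    (x y : R)
    (hxS : x ∉ S₁ ⊓ S₂ ⊓ S₃) (hyS : y ∉ S₁ ⊓ S₂ ⊓ S₃)
    (hS₁ : (S₁ : Set R) = ((S₁ ⊓ S₂ ⊓ S₃ : NonUnitalSubring R) : Set R) ∪
      ((· + x) '' ((S₁ ⊓ S₂ ⊓ S₃ : NonUnitalSubring R) : Set R)))
    (hS₂ : (S₂ : Set R) = ((S₁ ⊓ S₂ ⊓ S₃ : NonUnitalSubring R) : Set R) ∪
      ((· + y) '' ((S₁ ⊓ S₂ ⊓ S₃ : NonUnitalSubring R) : Set R)))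
    (hS₃ : (S₃ : Set R) = ((S₁ ⊓ S₂ ⊓ S₃ : NonUnitalSubring R) : Set R) ∪
      ((· + (x + y)) '' ((S₁ ⊓ S₂ ⊓ S₃ : NonUnitalSubring R) : Set R))) :
    ∀ s ∈ S₁ ⊓ S₂ ⊓ S₃,
      (s * x ∈ S₁ ⊓ S₂ ⊓ S₃ ↔ s * y ∈ S₁ ⊓ S₂ ⊓ S₃) ∧
      (x * s ∈ S₁ ⊓ S₂ ⊓ S₃ ↔ y * s ∈ S₁ ⊓ S₂ ⊓ S₃) := by
  set S := S₁ ⊓ S₂ ⊓ S₃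
  have key {a b : R} (ha : a ∈ S₁) (hb : b ∈ S₂) (hab : a + b ∈ S₃) : a ∈ S ↔ b ∈ S :=
    S.toAddSubgroup.mem_iff_mem_of_mem_union_image_add hxS hyS
      (hS₁ ▸ ha) (hS₂ ▸ hb) (hS₃ ▸ hab)
  have hx : x ∈ S₁ := (hS₁ ▸ Or.inr ⟨0, S.zero_mem, zero_add x⟩ : x ∈ (S₁ : Set R))
  have hy : y ∈ S₂ := (hS₂ ▸ Or.inr ⟨0, S.zero_mem, zero_add y⟩ : y ∈ (S₂ : Set R))
  have hxy : x + y ∈ S₃ :=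
    (hS₃ ▸ Or.inr ⟨0, S.zero_mem, zero_add (x + y)⟩ : x + y ∈ (S₃ : Set R))
  intro s hs
  exact ⟨key (S₁.mul_mem hs.1.1 hx) (S₂.mul_mem hs.1.2 hy) (mul_add s x y ▸ S₃.mul_mem hs.2 hxy),
    key (S₁.mul_mem hx hs.1.1) (S₂.mul_mem hy hs.1.2) (add_mul x y s ▸ S₃.mul_mem hxy hs.2)⟩

/-- Setup: `R = S₁ ∪ S₂ ∪ S₃` with the `Sᵢ` proper subrings,
`S = S₁ ∩ S₂ ∩ S₃` containing no nonzero two-sided ideal of `R`, `2R = 0`, and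
`(R,+) = S ⊕ {0, x, y, x+y}` with `(S₁,+) = S ⊕ {0,x}`, `(S₂,+) = S ⊕ {0,y}`,
`(S₃,+) = S ⊕ {0,x+y}`.  Then for any `s ∈ S`: `sx ∈ S ↔ sy ∈ S` and
`xs ∈ S ↔ ys ∈ S`. -/
theorem good_cover_lemma_one
    (R : Type*) [NonUnitalRing R] (S₁ S₂ S₃ : NonUnitalSubring R)
    (h₁ : S₁ ≠ ⊤) (h₂ : S₂ ≠ ⊤) (h₃ : S₃ ≠ ⊤)
    (hcover : ∀ r : R, r ∈ S₁ ∨ r ∈ S₂ ∨ r ∈ S₃)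
    (hideal : ∀ I : TwoSidedIdeal R,
      (I : Set R) ⊆ ((S₁ ⊓ S₂ ⊓ S₃ : NonUnitalSubring R) : Set R) → I = ⊥)
    (hchar : ∀ r : R, r + r = 0)
    (x y : R)
    (hxS : x ∉ S₁ ⊓ S₂ ⊓ S₃) (hyS : y ∉ S₁ ⊓ S₂ ⊓ S₃) (hxyS : x + y ∉ S₁ ⊓ S₂ ⊓ S₃)
    (hS₁ : (S₁ : Set R) = ((S₁ ⊓ S₂ ⊓ S₃ : NonUnitalSubring R) : Set R) ∪
      ((· + x) '' ((S₁ ⊓ S₂ ⊓ S₃ : NonUnitalSubring R) : Set R)))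
    (hS₂ : (S₂ : Set R) = ((S₁ ⊓ S₂ ⊓ S₃ : NonUnitalSubring R) : Set R) ∪
      ((· + y) '' ((S₁ ⊓ S₂ ⊓ S₃ : NonUnitalSubring R) : Set R)))
    (hS₃ : (S₃ : Set R) = ((S₁ ⊓ S₂ ⊓ S₃ : NonUnitalSubring R) : Set R) ∪
      ((· + (x + y)) '' ((S₁ ⊓ S₂ ⊓ S₃ : NonUnitalSubring R) : Set R))) :
    ∀ s ∈ S₁ ⊓ S₂ ⊓ S₃,
      (s * x ∈ S₁ ⊓ S₂ ⊓ S₃ ↔ s * y ∈ S₁ ⊓ S₂ ⊓ S₃) ∧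
      (x * s ∈ S₁ ⊓ S₂ ⊓ S₃ ↔ y * s ∈ S₁ ⊓ S₂ ⊓ S₃) :=
  good_cover_lemma_one_general R S₁ S₂ S₃ x y hxS hyS hS₁ hS₂ hS₃
end

section
/- Under the setup of the previous lemma, let T = {s ∈ S : sx ∈ S and xs ∈ S}. If t ∈ T then all of tx, xt, ty, yt, xty, ytx, xtx, yty lie in S. -/
/-!
With `S = S₁ ∩ S₂ ∩ S₃`, each `Sᵢ` is `S` together with one coset `S + a`, and the three
translates `x`, `y`, `x + y` are pairwise incongruent modulo `S`. Hence an element lying in two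
of the `Sᵢ` already lies in `S`, and it suffices to place each product in two of them, using
`y = (x + y) - x` and the products already known to lie in `S`.
-/

section CosetUnion

variable {G σ : Type*} [AddCommGroup G] [SetLike σ G] [AddSubgroupClass σ G]
  {A : σ} {B C : Set G} {a b r : G}

theorem mem_of_eq_union_image_add_right (hB : B = (A : Set G) ∪ (· + a) '' A) : a ∈ B :=
  hB ▸ Or.inr ⟨0, zero_mem A, zero_add a⟩

theorem mem_of_mem_of_eq_union_image_add_right (hab : a - b ∉ A)
    (hB : B = (A : Set G) ∪ (· + a) '' A) (hC : C = (A : Set G) ∪ (· + b) '' A)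
    (hrB : r ∈ B) (hrC : r ∈ C) : r ∈ A := by
  subst hB hC
  obtain hr | ⟨s, hs, rfl⟩ := hrB
  · exact hr
  obtain hr | ⟨s', hs', hss'⟩ := hrC
  · exact hr
  refine absurd ?_ hab
  have : a - b = s' - s := by
    rw [sub_eq_sub_iff_add_eq_add, add_comm]
    exact hss'.symm
  exact this ▸ sub_mem hs' hs

end CosetUnion

theorem good_cover_lemma_two_general
    (R : Type*) [NonUnitalRing R] (S₁ S₂ S₃ : NonUnitalSubring R)
    (hchar : ∀ r : R, r + r = 0)
    (x y : R)
    (hxS : x ∉ S₁ ⊓ S₂ ⊓ S₃) (hyS : y ∉ S₁ ⊓ S₂ ⊓ S₃) (hxyS : x + y ∉ S₁ ⊓ S₂ ⊓ S₃)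
    (hS₁ : (S₁ : Set R) = ((S₁ ⊓ S₂ ⊓ S₃ : NonUnitalSubring R) : Set R) ∪
      ((· + x) '' ((S₁ ⊓ S₂ ⊓ S₃ : NonUnitalSubring R) : Set R)))
    (hS₂ : (S₂ : Set R) = ((S₁ ⊓ S₂ ⊓ S₃ : NonUnitalSubring R) : Set R) ∪
      ((· + y) '' ((S₁ ⊓ S₂ ⊓ S₃ : NonUnitalSubring R) : Set R)))
    (hS₃ : (S₃ : Set R) = ((S₁ ⊓ S₂ ⊓ S₃ : NonUnitalSubring R) : Set R) ∪
      ((· + (x + y)) '' ((S₁ ⊓ S₂ ⊓ S₃ : NonUnitalSubring R) : Set R)))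
    (t : R) (ht : t ∈ S₁ ⊓ S₂ ⊓ S₃)
    (htx : t * x ∈ S₁ ⊓ S₂ ⊓ S₃) (hxt : x * t ∈ S₁ ⊓ S₂ ⊓ S₃) :
    t * x ∈ S₁ ⊓ S₂ ⊓ S₃ ∧ x * t ∈ S₁ ⊓ S₂ ⊓ S₃ ∧
    t * y ∈ S₁ ⊓ S₂ ⊓ S₃ ∧ y * t ∈ S₁ ⊓ S₂ ⊓ S₃ ∧
    x * t * y ∈ S₁ ⊓ S₂ ⊓ S₃ ∧ y * t * x ∈ S₁ ⊓ S₂ ⊓ S₃ ∧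
    x * t * x ∈ S₁ ⊓ S₂ ⊓ S₃ ∧ y * t * y ∈ S₁ ⊓ S₂ ⊓ S₃ := by
  set S := S₁ ⊓ S₂ ⊓ S₃
  have hx : x ∈ S₁ := mem_of_eq_union_image_add_right hS₁
  have hy : y ∈ S₂ := mem_of_eq_union_image_add_right hS₂
  have hxy : x + y ∈ S₃ := mem_of_eq_union_image_add_right hS₃
  -- `x - y = x + y` because `2R = 0`
  have mem₁₂ {r : R} (h₁ : r ∈ S₁) (h₂ : r ∈ S₂) : r ∈ S :=
    mem_of_mem_of_eq_union_image_add_right (by rwa [sub_eq_add_neg, neg_eq_of_add_eq_zero_left (hchar y)])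
      hS₁ hS₂ h₁ h₂
  have mem₁₃ {r : R} (h₁ : r ∈ S₁) (h₃ : r ∈ S₃) : r ∈ S :=
    mem_of_mem_of_eq_union_image_add_right (by rwa [sub_add_cancel_left, neg_mem_iff])
      hS₁ hS₃ h₁ h₃
  have mem₂₃ {r : R} (h₂ : r ∈ S₂) (h₃ : r ∈ S₃) : r ∈ S :=
    mem_of_mem_of_eq_union_image_add_right (by rwa [add_comm x, sub_add_cancel_left, neg_mem_iff])
      hS₂ hS₃ h₂ h₃
  have hty : t * y ∈ S := mem₂₃ (S₂.mul_mem ht.1.2 hy) <| by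
    simpa only [mul_add, add_sub_cancel_left] using S₃.sub_mem (S₃.mul_mem ht.2 hxy) htx.2
  have hyt : y * t ∈ S := mem₂₃ (S₂.mul_mem hy ht.1.2) <| by
    simpa only [add_mul, add_sub_cancel_left] using S₃.sub_mem (S₃.mul_mem hxy ht.2) hxt.2
  have hxty : x * t * y ∈ S :=
    mem₁₂ (mul_assoc x t y ▸ S₁.mul_mem hx hty.1.1) (S₂.mul_mem hxt.1.2 hy)
  have hytx : y * t * x ∈ S :=
    mem₁₂ (S₁.mul_mem hyt.1.1 hx) (mul_assoc y t x ▸ S₂.mul_mem hy htx.1.2)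
  have hxtx : x * t * x ∈ S := mem₁₃ (S₁.mul_mem hxt.1.1 hx) <| by
    have h := S₃.sub_mem (S₃.mul_mem hxy htx.2) (mul_assoc y t x ▸ hytx.2)
    rwa [add_mul, add_sub_cancel_right, ← mul_assoc] at h
  have hyty : y * t * y ∈ S := mem₂₃ (S₂.mul_mem hyt.1.2 hy) <| by
    have h := S₃.sub_mem (S₃.mul_mem hxy hty.2) (mul_assoc x t y ▸ hxty.2)
    rwa [add_mul, add_sub_cancel_left, ← mul_assoc] at h
  exact ⟨htx, hxt, hty, hyt, hxty, hytx, hxtx, hyty⟩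

/-- Setup: `R = S₁ ∪ S₂ ∪ S₃` with the `Sᵢ` proper subrings,
`S = S₁ ∩ S₂ ∩ S₃` containing no nonzero two-sided ideal of `R`, `2R = 0`, and
`(R,+) = S ⊕ {0, x, y, x+y}` with `(S₁,+) = S ⊕ {0,x}`, `(S₂,+) = S ⊕ {0,y}`,
`(S₃,+) = S ⊕ {0,x+y}`.  Let `T = {s ∈ S : sx ∈ S and xs ∈ S}`.  If `t ∈ T`
then all of `tx, xt, ty, yt, xty, ytx, xtx, yty` lie in `S`. -/
theorem good_cover_lemma_two
    (R : Type*) [NonUnitalRing R] (S₁ S₂ S₃ : NonUnitalSubring R)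
    (h₁ : S₁ ≠ ⊤) (h₂ : S₂ ≠ ⊤) (h₃ : S₃ ≠ ⊤)
    (hcover : ∀ r : R, r ∈ S₁ ∨ r ∈ S₂ ∨ r ∈ S₃)
    (hideal : ∀ I : TwoSidedIdeal R,
      (I : Set R) ⊆ ((S₁ ⊓ S₂ ⊓ S₃ : NonUnitalSubring R) : Set R) → I = ⊥)
    (hchar : ∀ r : R, r + r = 0)
    (x y : R)
    (hxS : x ∉ S₁ ⊓ S₂ ⊓ S₃) (hyS : y ∉ S₁ ⊓ S₂ ⊓ S₃) (hxyS : x + y ∉ S₁ ⊓ S₂ ⊓ S₃)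
    (hS₁ : (S₁ : Set R) = ((S₁ ⊓ S₂ ⊓ S₃ : NonUnitalSubring R) : Set R) ∪
      ((· + x) '' ((S₁ ⊓ S₂ ⊓ S₃ : NonUnitalSubring R) : Set R)))
    (hS₂ : (S₂ : Set R) = ((S₁ ⊓ S₂ ⊓ S₃ : NonUnitalSubring R) : Set R) ∪
      ((· + y) '' ((S₁ ⊓ S₂ ⊓ S₃ : NonUnitalSubring R) : Set R)))
    (hS₃ : (S₃ : Set R) = ((S₁ ⊓ S₂ ⊓ S₃ : NonUnitalSubring R) : Set R) ∪
      ((· + (x + y)) '' ((S₁ ⊓ S₂ ⊓ S₃ : NonUnitalSubring R) : Set R)))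
    (t : R) (ht : t ∈ S₁ ⊓ S₂ ⊓ S₃)
    (htx : t * x ∈ S₁ ⊓ S₂ ⊓ S₃) (hxt : x * t ∈ S₁ ⊓ S₂ ⊓ S₃) :
    t * x ∈ S₁ ⊓ S₂ ⊓ S₃ ∧ x * t ∈ S₁ ⊓ S₂ ⊓ S₃ ∧
    t * y ∈ S₁ ⊓ S₂ ⊓ S₃ ∧ y * t ∈ S₁ ⊓ S₂ ⊓ S₃ ∧
    x * t * y ∈ S₁ ⊓ S₂ ⊓ S₃ ∧ y * t * x ∈ S₁ ⊓ S₂ ⊓ S₃ ∧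
    x * t * x ∈ S₁ ⊓ S₂ ⊓ S₃ ∧ y * t * y ∈ S₁ ⊓ S₂ ⊓ S₃ :=
  good_cover_lemma_two_general R S₁ S₂ S₃ hchar x y hxS hyS hxyS hS₁ hS₂ hS₃ t ht htx hxt
end

section
/- Let M be a not-necessarily-unital ring, and let M* = M ⊕ ⟨u⟩ with u + u = 0 and u acting as a multiplicative identity (unitalization over ℤ/2). If R = S₁ ∪ S₂ ∪ S₃ with the Sᵢ proper subrings, R has no multiplicative identity, and no nonzero ideal of R is contained in S₁ ∩ S₂ ∩ S₃, then R* = S₁* ∪ S₂* ∪ S₃* with the Sᵢ* proper subrings of R* and no nonzero ideal of R* contained in S₁* ∩ S₂* ∩ S₃*. -/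
/-!
Because the scalar part of `R*` ranges over `ℤ/2`, the subring `Sᵢ*` is exactly the set of
`λu + s` with `s ∈ Sᵢ`; properness and the covering property transfer at once. For an ideal `J`
of `R*`, the elements of `R` lying in `J` form an ideal of `R` inside `S₁ ∩ S₂ ∩ S₃`, hence zero.
So for `λu + s ∈ J` and every `r ∈ R` the products `λr + sr` and `λr + rs`, which lie in
`J ∩ R`, vanish; if `λ ≠ 0` then `-λ⁻¹s` would be an identity of `R`. Thus `λ = 0` and
`s ∈ J ∩ R = 0`.
-/

open Unitization

namespace NonUnitalSubring

variable {n : ℕ} {A : Type*} [NonUnitalRing A] [Module (ZMod n) A]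

variable (n) in
def zmodUnitization (S : NonUnitalSubring A) : Subring (Unitization (ZMod n) A) where
  carrier := {z | z.snd ∈ S}
  one_mem' := by simp
  zero_mem' := by simp
  add_mem' {x y} hx hy := by simpa using S.add_mem hx hy
  neg_mem' {x} hx := by simpa using S.neg_mem hx
  mul_mem' {x y} hx hy := by
    have smul_mem (c : ZMod n) {a : A} (ha : a ∈ S) : c • a ∈ S :=
      (AddSubgroup.toZModSubmodule n S.toAddSubgroup).smul_mem c ha
    simp only [Set.mem_ofPred_eq, snd_mul]
    exact S.add_mem (S.add_mem (smul_mem _ hy) (smul_mem _ hx)) (S.mul_mem hx hy)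

@[simp]
theorem mem_zmodUnitization {S : NonUnitalSubring A} {z : Unitization (ZMod n) A} :
    z ∈ S.zmodUnitization n ↔ z.snd ∈ S := .rfl

theorem closure_image_inr_eq_zmodUnitization [SMulCommClass (ZMod n) A A]
    [IsScalarTower (ZMod n) A A] (S : NonUnitalSubring A) :
    Subring.closure ((↑) '' (S : Set A)) = S.zmodUnitization n := by
  refine le_antisymm (Subring.closure_le.mpr ?_) fun z hz => ?_
  · rintro _ ⟨a, ha, rfl⟩
    simpa using ha
  · rw [← inl_fst_add_inr_snd_eq z, ← algebraMap_eq_inl, ← ZMod.intCast_zmod_cast z.fst,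
      map_intCast]
    exact add_mem (intCast_mem _ _) (Subring.subset_closure ⟨z.snd, hz, rfl⟩)

theorem zmodUnitization_ne_top {S : NonUnitalSubring A} (hS : S ≠ ⊤) :
    S.zmodUnitization n ≠ ⊤ := by
  contrapose! hS
  refine eq_top_iff.mpr fun a _ => ?_
  have : (a : Unitization (ZMod n) A) ∈ S.zmodUnitization n := hS ▸ Subring.mem_top _
  simpa using this

end NonUnitalSubring

namespace Unitization

variable {k A : Type*} [Field k] [NonUnitalRing A] [Module k A] [SMulCommClass k A A]
  [IsScalarTower k A A]

theorem exists_two_sided_one_of_fst_ne_zero {z : Unitization k A} (hz : z.fst ≠ 0)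
    (hl : ∀ a : A, z * (a : Unitization k A) = 0) (hr : ∀ a : A, (a : Unitization k A) * z = 0) :
    ∃ e : A, ∀ a : A, e * a = a ∧ a * e = a := by
  refine ⟨-(z.fst⁻¹ • z.snd), fun a => ⟨?_, ?_⟩⟩
  · have h := congrArg (·.snd) (hl a)
    simp only [snd_mul, fst_inr, snd_inr, zero_smul, add_zero, snd_zero] at h
    rw [neg_mul, smul_mul_assoc, eq_neg_of_add_eq_zero_right h, smul_neg, neg_neg,
      inv_smul_smul₀ hz]
  · have h := congrArg (·.snd) (hr a)
    simp only [snd_mul, fst_inr, snd_inr, zero_smul, zero_add, snd_zero] at h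
    rw [mul_neg, mul_smul_comm, eq_neg_of_add_eq_zero_right h, smul_neg, neg_neg,
      inv_smul_smul₀ hz]

theorem eq_bot_of_comap_inr_eq_bot (hA : ¬ ∃ e : A, ∀ a : A, e * a = a ∧ a * e = a)
    {J : TwoSidedIdeal (Unitization k A)} (hJ : J.comap (inrNonUnitalAlgHom k A) = ⊥) :
    J = ⊥ := by
  have eq_zero : ∀ {w : Unitization k A}, w ∈ J → w.fst = 0 → w = 0 := by
    intro w hw hw0
    have : w.snd ∈ J.comap (inrNonUnitalAlgHom k A) := by
      rw [TwoSidedIdeal.mem_comap, inrNonUnitalAlgHom_toFun]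
      convert hw
      ext <;> simp [hw0]
    rw [hJ, TwoSidedIdeal.mem_bot] at this
    ext <;> simp [hw0, this]
  refine eq_bot_iff.mpr fun z hz => (TwoSidedIdeal.mem_bot _).mpr (eq_zero hz ?_)
  by_contra hz0
  exact hA <| exists_two_sided_one_of_fst_ne_zero hz0
    (fun a => eq_zero (J.mul_mem_right _ _ hz) (by simp))
    (fun a => eq_zero (J.mul_mem_left _ _ hz) (by simp))

end Unitization

/-- Let `R` be a not-necessarily-unital ring of characteristic 2 (a module
over `ℤ/2`), and let `R* = Unitization (ZMod 2) R` be its `ℤ/2`-unitalization,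
obtained by adjoining a multiplicative identity `u` with `u + u = 0`.  If
`R = S₁ ∪ S₂ ∪ S₃` with the `Sᵢ` proper subrings, `R` has no multiplicative
identity, and no nonzero two-sided ideal of `R` is contained in
`S₁ ∩ S₂ ∩ S₃`, then `R* = S₁* ∪ S₂* ∪ S₃*` where `Sᵢ*`, the subring of `R*`
generated by `Sᵢ` and `u`, is proper, and no nonzero two-sided ideal of `R*`
is contained in `S₁* ∩ S₂* ∩ S₃*`. -/
theorem unitization_of_good_tuple
    (R : Type*) [NonUnitalRing R] [Module (ZMod 2) R]
    [SMulCommClass (ZMod 2) R R] [IsScalarTower (ZMod 2) R R]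
    (S₁ S₂ S₃ : NonUnitalSubring R)
    (h₁ : S₁ ≠ ⊤) (h₂ : S₂ ≠ ⊤) (h₃ : S₃ ≠ ⊤)
    (hcover : ∀ r : R, r ∈ S₁ ∨ r ∈ S₂ ∨ r ∈ S₃)
    (hideal : ∀ I : TwoSidedIdeal R,
      (I : Set R) ⊆ ((S₁ ⊓ S₂ ⊓ S₃ : NonUnitalSubring R) : Set R) → I = ⊥)
    (hnoid : ¬ ∃ e : R, ∀ r : R, e * r = r ∧ r * e = r) :
    (Subring.closure ((Unitization.inr : R → Unitization (ZMod 2) R) '' (S₁ : Set R)) ≠ ⊤) ∧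
    (Subring.closure ((Unitization.inr : R → Unitization (ZMod 2) R) '' (S₂ : Set R)) ≠ ⊤) ∧
    (Subring.closure ((Unitization.inr : R → Unitization (ZMod 2) R) '' (S₃ : Set R)) ≠ ⊤) ∧
    (∀ z : Unitization (ZMod 2) R,
      z ∈ Subring.closure ((Unitization.inr : R → Unitization (ZMod 2) R) '' (S₁ : Set R)) ∨
      z ∈ Subring.closure ((Unitization.inr : R → Unitization (ZMod 2) R) '' (S₂ : Set R)) ∨
      z ∈ Subring.closure ((Unitization.inr : R → Unitization (ZMod 2) R) '' (S₃ : Set R))) ∧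
    (∀ J : TwoSidedIdeal (Unitization (ZMod 2) R),
      (J : Set (Unitization (ZMod 2) R)) ⊆
        (Subring.closure ((Unitization.inr : R → Unitization (ZMod 2) R) '' (S₁ : Set R)) : Set (Unitization (ZMod 2) R)) ∩
        (Subring.closure ((Unitization.inr : R → Unitization (ZMod 2) R) '' (S₂ : Set R)) : Set (Unitization (ZMod 2) R)) ∩
        (Subring.closure ((Unitization.inr : R → Unitization (ZMod 2) R) '' (S₃ : Set R)) : Set (Unitization (ZMod 2) R)) →
      J = ⊥) := by
  simp only [NonUnitalSubring.closure_image_inr_eq_zmodUnitization]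
  refine ⟨NonUnitalSubring.zmodUnitization_ne_top h₁, NonUnitalSubring.zmodUnitization_ne_top h₂,
    NonUnitalSubring.zmodUnitization_ne_top h₃, fun z => by simpa using hcover z.snd,
    fun J hJ => Unitization.eq_bot_of_comap_inr_eq_bot hnoid (hideal _ fun a ha => ?_)⟩
  simpa using hJ ((TwoSidedIdeal.mem_comap _).mp ha)
end

section
/- Suppose R is a ring with multiplicative identity 1 that is the union of three proper subrings S₁, S₂, S₃, with no nonzero ideal of R in S₁ ∩ S₂ ∩ S₃. Then either R ≅ ℤ/2 × ℤ/2, or 1 ∈ Sᵢ for all i = 1, 2, 3. -/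
/-!
Three proper subgroups covering an abelian group pairwise intersect in their common
intersection `T` and each has index two; in particular `1` lies in one `Sᵢ` or in all three.
If `1` lies in `S₁` only, then `S₂` and `S₃` are two-sided ideals (for `s ∈ S` and `r ∉ S`,
`r * s = (1 + r) * s - s` with `1 + r ∈ S`), and their indicator functions are ring
homomorphisms onto `ZMod 2`. The product of these two homomorphisms has kernel `S₂ ∩ S₃ = T`,
an ideal inside `S₁ ∩ S₂ ∩ S₃`, hence zero, so it is an isomorphism onto `ZMod 2 × ZMod 2`.
-/

namespace AddSubgroup

variable {G : Type*}

theorem exists_notMem_notMem [AddGroup G] {B C : AddSubgroup G} (hB : B ≠ ⊤) (hC : C ≠ ⊤) :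
    ∃ a, a ∉ B ∧ a ∉ C := by
  obtain ⟨b, hb⟩ := SetLike.exists_not_mem_of_ne_top B hB
  obtain ⟨c, hc⟩ := SetLike.exists_not_mem_of_ne_top C hC
  by_cases hbC : b ∈ C
  · by_cases hcB : c ∈ B
    · exact ⟨b + c, (add_mem_cancel_right hcB).not.mpr hb, (add_mem_cancel_left hbC).not.mpr hc⟩
    · exact ⟨c, hcB, hc⟩
  · exact ⟨b, hb, hbC⟩

variable [AddCommGroup G] {A B C : AddSubgroup G}

theorem exists_mem_notMem_notMem_of_cover (hB : B ≠ ⊤) (hC : C ≠ ⊤)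
    (hcov : ∀ x, x ∈ A ∨ x ∈ B ∨ x ∈ C) : ∃ a ∈ A, a ∉ B ∧ a ∉ C := by
  obtain ⟨a, haB, haC⟩ := exists_notMem_notMem hB hC
  exact ⟨a, (hcov a).resolve_right (not_or_intro haB haC), haB, haC⟩

theorem inf_le_of_cover_s10 (hB : B ≠ ⊤) (hC : C ≠ ⊤) (hcov : ∀ x, x ∈ A ∨ x ∈ B ∨ x ∈ C) :
    B ⊓ C ≤ A := by
  obtain ⟨a, haA, haB, haC⟩ := exists_mem_notMem_notMem_of_cover hB hC hcov
  intro x hx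
  obtain ⟨hxB, hxC⟩ := mem_inf.mp hx
  rcases hcov (a + x) with h | h | h
  · exact (add_mem_cancel_left haA).mp h
  · exact absurd ((add_mem_cancel_right hxB).mp h) haB
  · exact absurd ((add_mem_cancel_right hxC).mp h) haC

theorem add_mem_of_cover_s10 (hB : B ≠ ⊤) (hC : C ≠ ⊤) (hcov : ∀ x, x ∈ A ∨ x ∈ B ∨ x ∈ C)
    {x y : G} (hxB : x ∈ B) (hxA : x ∉ A) (hyA : y ∉ A) : x + y ∈ A := by
  have hBC := inf_le_of_cover_s10 hB hC hcov
  rcases (hcov y).resolve_left hyA with hyB | hyC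
  · obtain ⟨a, haA, haB, -⟩ := exists_mem_notMem_notMem_of_cover hB hC hcov
    have shift : ∀ a' ∈ A, a' ∉ B → ∀ z ∈ B, z ∉ A → a' + z ∈ C := fun a' ha'A ha'B z hzB hzA =>
      ((hcov _).resolve_left ((add_mem_cancel_left ha'A).not.mpr hzA)).resolve_left
        ((add_mem_cancel_right hzB).not.mpr ha'B)
    have hxyC : x + y ∈ C := by
      convert add_mem (shift a haA haB x hxB hxA)
        (shift (-a) (neg_mem haA) (by simpa using haB) y hyB hyA) using 1
      abel
    exact hBC ⟨add_mem hxB hyB, hxyC⟩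
  · by_contra h
    rcases (hcov (x + y)).resolve_left h with hxyB | hxyC
    · exact hyA (hBC ⟨(add_mem_cancel_left hxB).mp hxyB, hyC⟩)
    · exact hxA (hBC ⟨hxB, (add_mem_cancel_right hyC).mp hxyC⟩)

theorem index_eq_two_of_cover_s10 (hA : A ≠ ⊤) (hB : B ≠ ⊤) (hC : C ≠ ⊤)
    (hcov : ∀ x, x ∈ A ∨ x ∈ B ∨ x ∈ C) : A.index = 2 := by
  obtain ⟨g, hg⟩ := SetLike.exists_not_mem_of_ne_top A hA
  refine index_eq_two_iff_exists_notMem_and'.mpr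
    ⟨g, hg, fun y => or_iff_not_imp_right.mpr fun hy => ?_⟩
  rcases (hcov g).resolve_left hg with hgB | hgC
  · exact add_mem_of_cover_s10 hB hC hcov hgB hg hy
  · exact add_mem_of_cover_s10 hC hB (fun x => (hcov x).imp_right Or.symm) hgC hg hy

end AddSubgroup

namespace NonUnitalSubring

variable {R : Type*} [Ring R]

theorem mul_mem_iff_of_index_two {S : NonUnitalSubring R} (hS : S.toAddSubgroup.index = 2)
    (h1 : (1 : R) ∉ S) {x y : R} : x * y ∈ S ↔ x ∈ S ∨ y ∈ S := by
  have add_one_mem : ∀ {z : R}, z ∉ S → z + 1 ∈ S := fun hz =>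
    (AddSubgroup.add_mem_iff_of_index_two hS).mpr (iff_of_false hz h1)
  constructor
  · intro hxy
    by_contra! h
    have hx := add_one_mem h.1
    have hy := add_one_mem h.2
    have : x * y = (x + 1) * (y + 1) - (x + 1) - (y + 1) + 1 := by noncomm_ring
    rw [this] at hxy
    exact h1 ((add_mem_cancel_left (sub_mem (sub_mem (mul_mem hx hy) hx) hy)).mp hxy)
  · rintro (hx | hy)
    · by_cases hy : y ∈ S
      · exact mul_mem hx hy
      rw [show x * y = x * (y + 1) - x by noncomm_ring]
      exact sub_mem (mul_mem hx (add_one_mem hy)) hx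
    · by_cases hx : x ∈ S
      · exact mul_mem hx hy
      rw [show x * y = (x + 1) * y - y by noncomm_ring]
      exact sub_mem (mul_mem (add_one_mem hx) hy) hy

open Classical in
noncomputable def zmodTwoHom (S : NonUnitalSubring R) (hS : S.toAddSubgroup.index = 2)
    (h1 : (1 : R) ∉ S) : R →+* ZMod 2 where
  toFun x := if x ∈ S then 0 else 1
  map_one' := if_neg h1
  map_mul' x y := by
    by_cases hx : x ∈ S <;> by_cases hy : y ∈ S <;> simp [hx, hy, mul_mem_iff_of_index_two hS h1]
  map_zero' := if_pos S.zero_mem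
  map_add' x y := by
    have hadd : x + y ∈ S ↔ (x ∈ S ↔ y ∈ S) := AddSubgroup.add_mem_iff_of_index_two hS
    by_cases hx : x ∈ S <;> by_cases hy : y ∈ S <;> simp [hx, hy, hadd, CharTwo.add_self_eq_zero]

variable {S : NonUnitalSubring R} {hS : S.toAddSubgroup.index = 2} {h1 : (1 : R) ∉ S} {x : R}

@[simp]
theorem zmodTwoHom_of_mem (hx : x ∈ S) : S.zmodTwoHom hS h1 x = 0 := if_pos hx

@[simp]
theorem zmodTwoHom_of_notMem (hx : x ∉ S) : S.zmodTwoHom hS h1 x = 1 := if_neg hx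

theorem zmodTwoHom_eq_zero_iff : S.zmodTwoHom hS h1 x = 0 ↔ x ∈ S := by
  by_cases hx : x ∈ S <;> simp [hx]

variable {A B C : NonUnitalSubring R}

theorem nonempty_ringEquiv_zmod_two_prod_of_cover (hA : A ≠ ⊤) (hB : B ≠ ⊤) (hC : C ≠ ⊤)
    (hcov : ∀ x, x ∈ A ∨ x ∈ B ∨ x ∈ C)
    (hideal : ∀ I : TwoSidedIdeal R, (∀ x ∈ I, x ∈ A ∧ x ∈ B ∧ x ∈ C) → I = ⊥)
    (hA1 : (1 : R) ∈ A) (h1 : ¬((1 : R) ∈ A ∧ (1 : R) ∈ B ∧ (1 : R) ∈ C)) :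
    Nonempty (R ≃+* ZMod 2 × ZMod 2) := by
  replace hA : A.toAddSubgroup ≠ ⊤ := mt toAddSubgroup_eq_top.mp hA
  replace hB : B.toAddSubgroup ≠ ⊤ := mt toAddSubgroup_eq_top.mp hB
  replace hC : C.toAddSubgroup ≠ ⊤ := mt toAddSubgroup_eq_top.mp hC
  replace hcov : ∀ x, x ∈ A.toAddSubgroup ∨ x ∈ B.toAddSubgroup ∨ x ∈ C.toAddSubgroup := hcov
  have hcovB := fun x => (hcov x).rotate
  have hcovC := fun x => (hcovB x).rotate
  have h1B : (1 : R) ∉ B := fun h =>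
    h1 ⟨hA1, h, AddSubgroup.inf_le_of_cover_s10 hA hB hcovC ⟨hA1, h⟩⟩
  have h1C : (1 : R) ∉ C := fun h =>
    h1 ⟨hA1, AddSubgroup.inf_le_of_cover_s10 hC hA hcovB ⟨h, hA1⟩, h⟩
  let f := (B.zmodTwoHom (AddSubgroup.index_eq_two_of_cover_s10 hB hC hA hcovB) h1B).prod
    (C.zmodTwoHom (AddSubgroup.index_eq_two_of_cover_s10 hC hA hB hcovC) h1C)
  have hinj : Function.Injective f := by
    rw [← TwoSidedIdeal.ker_eq_bot]
    refine hideal _ fun x hx => ?_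
    obtain ⟨hxB, hxC⟩ : x ∈ B ∧ x ∈ C := by
      simpa [f, Prod.ext_iff, zmodTwoHom_eq_zero_iff] using (TwoSidedIdeal.mem_ker f).mp hx
    exact ⟨AddSubgroup.inf_le_of_cover_s10 hB hC hcov ⟨hxB, hxC⟩, hxB, hxC⟩
  obtain ⟨b, hbB, hbC, -⟩ := AddSubgroup.exists_mem_notMem_notMem_of_cover hC hA hcovB
  obtain ⟨c, hcC, -, hcB⟩ := AddSubgroup.exists_mem_notMem_notMem_of_cover hA hB hcovC
  have hsurj : Function.Surjective f := by
    rintro ⟨i, j⟩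
    fin_cases i <;> fin_cases j
    · exact ⟨0, map_zero f⟩
    · exact ⟨b, Prod.ext (zmodTwoHom_of_mem hbB) (zmodTwoHom_of_notMem hbC)⟩
    · exact ⟨c, Prod.ext (zmodTwoHom_of_notMem hcB) (zmodTwoHom_of_mem hcC)⟩
    · exact ⟨1, map_one f⟩
  exact ⟨RingEquiv.ofBijective f ⟨hinj, hsurj⟩⟩

end NonUnitalSubring

/-- Suppose `R` is a ring with multiplicative identity `1` that is the union
of three proper subrings `S₁, S₂, S₃` (which need not contain `1`), with no
nonzero two-sided ideal of `R` contained in `S₁ ∩ S₂ ∩ S₃`.  Then either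
`R ≅ ℤ/2 × ℤ/2`, or `1 ∈ Sᵢ` for all `i = 1, 2, 3`. -/
theorem one_in_subrings_or_klein
    (R : Type*) [Ring R] (S₁ S₂ S₃ : NonUnitalSubring R)
    (h₁ : S₁ ≠ ⊤) (h₂ : S₂ ≠ ⊤) (h₃ : S₃ ≠ ⊤)
    (hcover : ∀ r : R, r ∈ S₁ ∨ r ∈ S₂ ∨ r ∈ S₃)
    (hideal : ∀ I : TwoSidedIdeal R,
      (I : Set R) ⊆ ((S₁ ⊓ S₂ ⊓ S₃ : NonUnitalSubring R) : Set R) → I = ⊥) :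
    Nonempty (R ≃+* (ZMod 2 × ZMod 2)) ∨
      ((1 : R) ∈ S₁ ∧ (1 : R) ∈ S₂ ∧ (1 : R) ∈ S₃) := by
  by_cases h1 : (1 : R) ∈ S₁ ∧ (1 : R) ∈ S₂ ∧ (1 : R) ∈ S₃
  · exact .inr h1
  have hideal' : ∀ I : TwoSidedIdeal R, (∀ x ∈ I, x ∈ S₁ ∧ x ∈ S₂ ∧ x ∈ S₃) → I = ⊥ :=
    fun I hI => hideal I fun x hx => ⟨⟨(hI x hx).1, (hI x hx).2.1⟩, (hI x hx).2.2⟩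
  left
  rcases hcover 1 with h | h | h
  · exact NonUnitalSubring.nonempty_ringEquiv_zmod_two_prod_of_cover h₁ h₂ h₃ hcover hideal' h h1
  · exact NonUnitalSubring.nonempty_ringEquiv_zmod_two_prod_of_cover h₂ h₃ h₁
      (fun x => (hcover x).rotate) (fun I hI => hideal' I fun x hx => (hI x hx).rotate.rotate) h
      fun h' => h1 h'.rotate.rotate
  · exact NonUnitalSubring.nonempty_ringEquiv_zmod_two_prod_of_cover h₃ h₁ h₂
      (fun x => (hcover x).rotate.rotate) (fun I hI => hideal' I fun x hx => (hI x hx).rotate) h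
      fun h' => h1 h'.rotate
end

section
/- Up to isomorphism, there is a unique unital ring R of order 4 that is the union of three proper subrings none of which contains a nonzero ideal common to all three, namely R ≅ ℤ/2 × ℤ/2, and the three subrings are its three subrings of order 2. -/
/-! By Lagrange, a proper subring of a ring of order 4 has at most two elements, so it is `{0, x}`
for a single `x`; as every element lies in one of the covering subrings, `x * x ∈ {0, x}` for all
`x`. For `x = -1` this forces `2 = 0`, and then `(1 + a)² = 1 + a²` rules out `a² = 0` for
`a ≠ 0`: every element is idempotent. Any idempotent `e ∉ {0, 1}` now splits `R` as
`𝔽₂ e × 𝔽₂ (1 - e)`. Finally, three sets of size at most 2 through `0` can only cover four points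
if each has exactly two elements and no two coincide. -/

theorem ZMod.commute_cast {R : Type*} [Ring R] {n : ℕ} (x : ZMod n) (r : R) :
    Commute (x.cast : R) r := by
  rw [← ZMod.intCast_cast]
  exact Int.cast_commute _ _

namespace ZMod

variable {R : Type*} [Ring R] {n : ℕ} [CharP R n] {e : R}

def prodRingHomOfIsIdempotentElem (he : IsIdempotentElem e) : ZMod n × ZMod n →+* R where
  toFun p := p.1.cast * e + p.2.cast * (1 - e)
  map_one' := by simp [cast_one (dvd_refl n)]
  map_zero' := by simp
  map_add' p q := by
    simp only [Prod.fst_add, Prod.snd_add, cast_add (dvd_refl n)]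
    noncomm_ring
  map_mul' p q := by
    have hmul (a b : ZMod n) (u v : R) :
        a.cast * u * (b.cast * v) = (a.cast * b.cast) * (u * v) := by
      rw [mul_assoc, ← mul_assoc u, ← (commute_cast b u).eq, mul_assoc, mul_assoc]
    simp only [add_mul, mul_add, hmul, he.eq, he.one_sub.eq, he.mul_one_sub_self,
      he.one_sub_mul_self, mul_zero, add_zero, zero_add,
      Prod.fst_mul, Prod.snd_mul, cast_mul (dvd_refl n)]

@[simp]
theorem prodRingHomOfIsIdempotentElem_apply (he : IsIdempotentElem e) (p : ZMod n × ZMod n) :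
    prodRingHomOfIsIdempotentElem he p = p.1.cast * e + p.2.cast * (1 - e) :=
  rfl

theorem eq_zero_of_cast_mul_eq_zero [Fact n.Prime] {x : ZMod n} {r : R} (hr : r ≠ 0)
    (h : x.cast * r = 0) : x = 0 := by
  by_contra hx
  apply hr
  rw [← one_mul r, ← cast_one (dvd_refl n), ← inv_mul_cancel₀ hx, cast_mul (dvd_refl n),
    mul_assoc, h, mul_zero]

theorem prodRingHomOfIsIdempotentElem_injective [Fact n.Prime] (he : IsIdempotentElem e)
    (he₀ : e ≠ 0) (he₁ : e ≠ 1) :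
    Function.Injective (prodRingHomOfIsIdempotentElem he (n := n)) := by
  rw [injective_iff_map_eq_zero]
  rintro ⟨x, y⟩ hxy
  rw [prodRingHomOfIsIdempotentElem_apply] at hxy
  have hx : x.cast * e = 0 := by
    simpa [add_mul, mul_assoc, he.eq, he.one_sub_mul_self] using congrArg (· * e) hxy
  have hy : y.cast * (1 - e) = 0 := by
    simpa [add_mul, mul_assoc, he.one_sub.eq, he.mul_one_sub_self]
      using congrArg (· * (1 - e)) hxy
  rw [eq_zero_of_cast_mul_eq_zero he₀ hx, eq_zero_of_cast_mul_eq_zero (sub_ne_zero.2 he₁.symm) hy]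
  rfl

end ZMod

theorem AddSubgroup.card_le_two_of_ne_top {G : Type*} [AddGroup G] (hG : Nat.card G = 4)
    {H : AddSubgroup G} (hH : H ≠ ⊤) : Nat.card H ≤ 2 := by
  have : Finite G := Nat.finite_of_card_ne_zero (by omega)
  have hdvd : Nat.card H ∣ 4 := hG ▸ H.card_addSubgroup_dvd_card
  have hne : Nat.card H ≠ 4 := fun h ↦ hH (H.card_eq_iff_eq_top.1 (h.trans hG.symm))
  have hle : Nat.card H ≤ 4 := Nat.le_of_dvd (by norm_num) hdvd
  interval_cases h : Nat.card H <;> simp_all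

namespace Set

variable {α : Type*} {s t : Set α} {x y z : α}

theorem eq_or_eq_of_ncard_le_two (hs : s.ncard ≤ 2) (hfin : s.Finite) (hx : x ∈ s) (hy : y ∈ s)
    (hz : z ∈ s) (hxy : x ≠ y) : z = x ∨ z = y := by
  by_contra! h
  have := (two_lt_ncard_iff hfin).2 ⟨x, y, z, hx, hy, hz, hxy, h.1.symm, h.2.symm⟩
  omega

theorem eq_of_ncard_eq_two (hs : s.ncard = 2) (ht : t.ncard = 2) (hxs : x ∈ s) (hys : y ∈ s)
    (hxt : x ∈ t) (hyt : y ∈ t) (hxy : x ≠ y) : s = t := by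
  have hpair (u : Set α) (hu : u.ncard = 2) (hx : x ∈ u) (hy : y ∈ u) : {x, y} = u :=
    eq_of_subset_of_ncard_le (pair_subset hx hy) (by rw [hu, ncard_pair hxy])
      (finite_of_ncard_pos (by omega))
  rw [← hpair s hs hxs hys, hpair t ht hxt hyt]

theorem ncard_eq_two_of_union_eq_univ [Finite α] (hα : Nat.card α = 4) {A B C : Set α}
    (hA : A.ncard ≤ 2) (hB : B.ncard ≤ 2) (hC : C.ncard ≤ 2) (hxA : x ∈ A) (hxB : x ∈ B)
    (hxC : x ∈ C) (hcov : A ∪ B ∪ C = univ) :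
    A.ncard = 2 ∧ B.ncard = 2 ∧ C.ncard = 2 ∧ A ≠ B ∧ A ≠ C ∧ B ≠ C := by
  have hlt {u v : Set α} (hu : x ∈ u) (hv : x ∈ v) : (u ∪ v).ncard < u.ncard + v.ncard :=
    ncard_union_lt (h := not_disjoint_iff.2 ⟨x, hu, hv⟩)
  have huniv : (A ∪ B ∪ C).ncard = 4 := by rw [hcov, ncard_univ, hα]
  have hAB := hlt hxA hxB
  have hABC := hlt (mem_union_left B hxA) hxC
  refine ⟨by omega, by omega, by omega, ?_, ?_, ?_⟩ <;> rintro rfl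
  · have := hlt hxA hxC
    simp only [union_self] at huniv
    omega
  · have : (A ∪ B ∪ A).ncard = (A ∪ B).ncard := by rw [union_comm, ← union_assoc, union_self]
    omega
  · have : (A ∪ B ∪ B).ncard = (A ∪ B).ncard := by rw [union_assoc, union_self]
    omega

end Set

namespace NonUnitalSubring

variable {R : Type*} [Ring R] {S : NonUnitalSubring R} {x y : R}

theorem ncard_le_two_of_ne_top (hR : Nat.card R = 4) (hS : S ≠ ⊤) : (S : Set R).ncard ≤ 2 := by
  rw [← Nat.card_coe_set_eq]
  refine AddSubgroup.card_le_two_of_ne_top hR (H := S.toAddSubgroup) fun h ↦ hS ?_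
  exact eq_top_iff.2 fun x _ ↦ (h ▸ AddSubgroup.mem_top x : x ∈ S.toAddSubgroup)

theorem eq_zero_or_eq_of_ne_top [Finite R] (hR : Nat.card R = 4) (hS : S ≠ ⊤) (hx : x ∈ S)
    (hx₀ : x ≠ 0) (hy : y ∈ S) : y = 0 ∨ y = x :=
  Set.eq_or_eq_of_ncard_le_two (ncard_le_two_of_ne_top hR hS) (Set.toFinite _) S.zero_mem hx hy
    hx₀.symm

theorem mul_self_eq_zero_or_self_of_ne_top [Finite R] (hR : Nat.card R = 4) (hS : S ≠ ⊤)
    (hx : x ∈ S) : x * x = 0 ∨ x * x = x := by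
  rcases eq_or_ne x 0 with rfl | hx₀
  · exact Or.inl (mul_zero 0)
  · exact eq_zero_or_eq_of_ne_top hR hS hx hx₀ (S.mul_mem hx hx)

end NonUnitalSubring

section MulSelf

variable {R : Type*} [Ring R]

theorem two_eq_zero_of_forall_mul_self (h : ∀ x : R, x * x = 0 ∨ x * x = x) : (2 : R) = 0 := by
  rcases h (-1) with h₁ | h₁ <;> rw [neg_one_mul, neg_neg] at h₁
  · rw [← mul_one 2, h₁, mul_zero]
  · rw [← one_add_one_eq_two]
    exact (congrArg (1 + ·) h₁).trans (add_neg_cancel 1)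

theorem isIdempotentElem_of_forall_mul_self (h : ∀ x : R, x * x = 0 ∨ x * x = x) (a : R) :
    IsIdempotentElem a := by
  rcases h a with ha | ha
  · suffices a = 0 by rw [this]; exact IsIdempotentElem.zero
    have hsq : (1 + a) * (1 + a) = 1 := by
      calc (1 + a) * (1 + a) = 1 + 2 * a + a * a := by noncomm_ring
        _ = 1 := by rw [two_eq_zero_of_forall_mul_self h, ha, zero_mul, add_zero, add_zero]
    rcases h (1 + a) with h' | h' <;> rw [hsq] at h'
    · exact (subsingleton_of_zero_eq_one h'.symm).elim a 0
    · simpa using h'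
  · exact ha

end MulSelf

section CoverOfCardFour

variable {R : Type*} [Ring R] {S₁ S₂ S₃ : NonUnitalSubring R}

theorem nonempty_ringEquiv_of_card_eq_four_of_cover (hR : Nat.card R = 4) (h₁ : S₁ ≠ ⊤)
    (h₂ : S₂ ≠ ⊤) (h₃ : S₃ ≠ ⊤) (hcov : ∀ r : R, r ∈ S₁ ∨ r ∈ S₂ ∨ r ∈ S₃) :
    Nonempty (R ≃+* (ZMod 2 × ZMod 2)) := by
  have : Finite R := Nat.finite_of_card_ne_zero (by omega)
  have : Nontrivial R := Finite.one_lt_card_iff_nontrivial.1 (by omega)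
  have hsq (x : R) : x * x = 0 ∨ x * x = x := by
    rcases hcov x with hx | hx | hx
    exacts [S₁.mul_self_eq_zero_or_self_of_ne_top hR h₁ hx,
      S₂.mul_self_eq_zero_or_self_of_ne_top hR h₂ hx,
      S₃.mul_self_eq_zero_or_self_of_ne_top hR h₃ hx]
  have : CharP R 2 :=
    CharTwo.of_one_ne_zero_of_two_eq_zero one_ne_zero (two_eq_zero_of_forall_mul_self hsq)
  obtain ⟨e, -, he⟩ : ∃ e ∈ Set.univ, e ∉ ({0, 1} : Set R) :=
    Set.exists_mem_notMem_of_ncard_lt_ncard (by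
      rw [Set.ncard_univ, hR]
      exact (Set.ncard_insert_le _ _).trans_lt (by simp))
  simp only [Set.mem_insert_iff, Set.mem_singleton_iff, not_or] at he
  have hinj := ZMod.prodRingHomOfIsIdempotentElem_injective (n := 2)
    (isIdempotentElem_of_forall_mul_self hsq e) he.1 he.2
  exact ⟨(RingEquiv.ofBijective _ (hinj.bijective_of_nat_card_le (by simp [hR]))).symm⟩

theorem card_eq_two_of_card_eq_four_of_cover (hR : Nat.card R = 4) (h₁ : S₁ ≠ ⊤)
    (h₂ : S₂ ≠ ⊤) (h₃ : S₃ ≠ ⊤) (hcov : ∀ r : R, r ∈ S₁ ∨ r ∈ S₂ ∨ r ∈ S₃) :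
    Nat.card S₁ = 2 ∧ Nat.card S₂ = 2 ∧ Nat.card S₃ = 2 ∧
      S₁ ≠ S₂ ∧ S₁ ≠ S₃ ∧ S₂ ≠ S₃ ∧
      ∀ T : NonUnitalSubring R, Nat.card T = 2 → T = S₁ ∨ T = S₂ ∨ T = S₃ := by
  have : Finite R := Nat.finite_of_card_ne_zero (by omega)
  obtain ⟨c₁, c₂, c₃, d₁₂, d₁₃, d₂₃⟩ := Set.ncard_eq_two_of_union_eq_univ hR
    (S₁.ncard_le_two_of_ne_top hR h₁) (S₂.ncard_le_two_of_ne_top hR h₂)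
    (S₃.ncard_le_two_of_ne_top hR h₃) S₁.zero_mem S₂.zero_mem S₃.zero_mem
    (Set.eq_univ_of_forall fun r ↦ by simpa [or_assoc] using hcov r)
  refine ⟨(Nat.card_coe_set_eq _).trans c₁, (Nat.card_coe_set_eq _).trans c₂,
    (Nat.card_coe_set_eq _).trans c₃, fun h ↦ d₁₂ (by rw [h]), fun h ↦ d₁₃ (by rw [h]),
    fun h ↦ d₂₃ (by rw [h]), fun T hT ↦ ?_⟩
  replace hT : (T : Set R).ncard = 2 := (Nat.card_coe_set_eq _).symm.trans hT
  obtain ⟨t, htT, ht₀⟩ := Set.exists_ne_of_one_lt_ncard (by omega : 1 < (T : Set R).ncard) 0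
  have hT_eq {S : NonUnitalSubring R} (hS : (S : Set R).ncard = 2) (htS : t ∈ S) : T = S :=
    SetLike.coe_injective (Set.eq_of_ncard_eq_two hT hS T.zero_mem htT S.zero_mem htS ht₀.symm)
  rcases hcov t with ht | ht | ht
  exacts [Or.inl (hT_eq c₁ ht), Or.inr (Or.inl (hT_eq c₂ ht)), Or.inr (Or.inr (hT_eq c₃ ht))]

end CoverOfCardFour

namespace NonUnitalSubring

variable {R : Type*} [NonUnitalRing R] {e x : R}

def pair (e : R) (he : IsIdempotentElem e) (h2 : e + e = 0) : NonUnitalSubring R where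
  carrier := {0, e}
  zero_mem' := Or.inl rfl
  add_mem' := by
    rintro a b (rfl | rfl) (rfl | rfl) <;> simp [h2]
  neg_mem' := by
    rintro a (rfl | rfl) <;> simp [neg_eq_of_add_eq_zero_left h2]
  mul_mem' := by
    rintro a b (rfl | rfl) (rfl | rfl) <;> simp [he.eq]

theorem mem_pair {he : IsIdempotentElem e} {h2 : e + e = 0} : x ∈ pair e he h2 ↔ x = 0 ∨ x = e :=
  Iff.rfl

end NonUnitalSubring

open NonUnitalSubring in
theorem exists_cover_zmod_two_prod :
    ∃ T₁ T₂ T₃ : NonUnitalSubring (ZMod 2 × ZMod 2),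
      T₁ ≠ ⊤ ∧ T₂ ≠ ⊤ ∧ T₃ ≠ ⊤ ∧
      (∀ r, r ∈ T₁ ∨ r ∈ T₂ ∨ r ∈ T₃) ∧
      ∀ I : TwoSidedIdeal (ZMod 2 × ZMod 2),
        (I : Set (ZMod 2 × ZMod 2)) ⊆
          ((T₁ ⊓ T₂ ⊓ T₃ : NonUnitalSubring (ZMod 2 × ZMod 2)) : Set (ZMod 2 × ZMod 2)) →
        I = ⊥ := by
  have hidem : ∀ u : ZMod 2 × ZMod 2, IsIdempotentElem u := by unfold IsIdempotentElem; decide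
  have h2 : ∀ u : ZMod 2 × ZMod 2, u + u = 0 := by decide
  have hne_top (u v : ZMod 2 × ZMod 2) (hv : v ≠ 0 ∧ v ≠ u) : pair u (hidem u) (h2 u) ≠ ⊤ :=
    fun h ↦ by simpa [mem_pair, hv] using (h ▸ mem_top v : v ∈ pair u (hidem u) (h2 u))
  refine ⟨pair (1, 0) (hidem _) (h2 _), pair (0, 1) (hidem _) (h2 _),
    pair (1, 1) (hidem _) (h2 _), hne_top _ (0, 1) (by decide), hne_top _ (1, 0) (by decide),
    hne_top _ (1, 0) (by decide), ?_, fun I hI ↦ ?_⟩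
  · simp only [mem_pair]
    decide
  · have hinf : ∀ x, x ∈ pair (1, 0) (hidem _) (h2 _) ⊓ pair (0, 1) (hidem _) (h2 _) ⊓
        pair (1, 1) (hidem _) (h2 _) → x = 0 := by
      simp only [mem_inf, mem_pair]
      decide
    exact (TwoSidedIdeal.ext fun x ↦ ⟨fun hx ↦ hinf x (hI hx), fun hx ↦ hx ▸ I.zero_mem⟩)

/-- Up to isomorphism there is a unique unital ring `R` of order 4 that is the
union of three proper subrings with no nonzero two-sided ideal of `R` in their
common intersection, namely `R ≅ ℤ/2 × ℤ/2`; the three subrings are the three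
subrings of `R` of order 2.  We state: (a) such a cover of `ℤ/2 × ℤ/2` exists,
and (b) any unital ring of order 4 with such a cover is isomorphic to
`ℤ/2 × ℤ/2` and the three covering subrings are pairwise distinct of order 2,
and every subring of order 2 is one of them. -/
theorem good_unital_ring_of_order_four :
    (∃ T₁ T₂ T₃ : NonUnitalSubring (ZMod 2 × ZMod 2),
      T₁ ≠ ⊤ ∧ T₂ ≠ ⊤ ∧ T₃ ≠ ⊤ ∧
      (∀ r, r ∈ T₁ ∨ r ∈ T₂ ∨ r ∈ T₃) ∧
      (∀ I : TwoSidedIdeal (ZMod 2 × ZMod 2),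
        (I : Set (ZMod 2 × ZMod 2)) ⊆
          ((T₁ ⊓ T₂ ⊓ T₃ : NonUnitalSubring (ZMod 2 × ZMod 2)) : Set (ZMod 2 × ZMod 2)) →
        I = ⊥)) ∧
    (∀ (R : Type) (_ : Ring R), Nat.card R = 4 →
      ∀ S₁ S₂ S₃ : NonUnitalSubring R,
        S₁ ≠ ⊤ → S₂ ≠ ⊤ → S₃ ≠ ⊤ →
        (∀ r : R, r ∈ S₁ ∨ r ∈ S₂ ∨ r ∈ S₃) →
        (∀ I : TwoSidedIdeal R,
          (I : Set R) ⊆ ((S₁ ⊓ S₂ ⊓ S₃ : NonUnitalSubring R) : Set R) → I = ⊥) →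
        Nonempty (R ≃+* (ZMod 2 × ZMod 2)) ∧
        Nat.card S₁ = 2 ∧ Nat.card S₂ = 2 ∧ Nat.card S₃ = 2 ∧
        S₁ ≠ S₂ ∧ S₁ ≠ S₃ ∧ S₂ ≠ S₃ ∧
        (∀ T : NonUnitalSubring R, Nat.card T = 2 → T = S₁ ∨ T = S₂ ∨ T = S₃)) :=
  ⟨exists_cover_zmod_two_prod, fun _ _ hR _ _ _ h₁ h₂ h₃ hcov _ ↦
    ⟨nonempty_ringEquiv_of_card_eq_four_of_cover hR h₁ h₂ h₃ hcov,
      card_eq_two_of_card_eq_four_of_cover hR h₁ h₂ h₃ hcov⟩⟩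
end

section
/- Let R be a unital ring of order 8 that is the union of three proper subrings with no nonzero ideal in their common intersection. Then u² = 0 for every element u of the Jacobson radical of R. -/
/-!
For `u` in the Jacobson radical, `1 + u` is a unit, so in a finite ring some power of it is `1`.
Hence the proper subring `T` containing `1 + u`, which has at most four elements, contains `1`,
`u` and `u * u`. If `u * u ≠ 0`, then `0, 1, u, 1 + u, u * u` are five distinct elements of `T`:
a coincidence would either put `1` in the radical or make `u` a nonzero idempotent in it.
-/

theorem Ideal.isUnit_one_add_mul_of_mem_jacobson_bot {R : Type*} [Ring R] {u : R}
    (hu : u ∈ (⊥ : Ideal R).jacobson) (y : R) : IsUnit (1 + y * u) := by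
  have left_inv : ∀ y : R, ∃ z, z * (1 + y * u) = 1 := fun y ↦ by
    obtain ⟨z, hz⟩ := Ideal.mem_jacobson_iff.mp hu y
    exact ⟨z, by rw [← sub_eq_zero, ← (Submodule.mem_bot R).mp hz]; noncomm_ring⟩
  obtain ⟨z, hz⟩ := left_inv y
  -- `z = 1 + (-(z * y)) * u` has a left inverse too, which must then be `1 + y * u`.
  obtain ⟨w, hw⟩ := left_inv (-(z * y))
  have hz' : 1 + -(z * y) * u = z := calc
    1 + -(z * y) * u = z * (1 + y * u) + -(z * y) * u := by rw [hz]
    _ = z := by noncomm_ring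
  rw [hz'] at hw
  have hw' : w = 1 + y * u := calc
    w = w * (z * (1 + y * u)) := by rw [hz, mul_one]
    _ = 1 + y * u := by rw [← mul_assoc, hw, one_mul]
  exact ⟨⟨1 + y * u, z, hw' ▸ hw, hz⟩, rfl⟩

theorem IsIdempotentElem.eq_zero_of_mem_jacobson_bot {R : Type*} [Ring R] {u : R}
    (h : IsIdempotentElem u) (hu : u ∈ (⊥ : Ideal R).jacobson) : u = 0 := by
  have hunit := Ideal.isUnit_one_add_mul_of_mem_jacobson_bot hu (-1)
  refine hunit.mul_right_eq_zero.mp ?_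
  rw [add_mul, one_mul, neg_one_mul, neg_mul, h.eq, add_neg_cancel]

theorem one_mem_of_isOfFinOrder_of_mem {M S : Type*} [Monoid M] [SetLike S M] [MulMemClass S M]
    {s : S} {x : M} (hx : IsOfFinOrder x) (hxs : x ∈ s) : (1 : M) ∈ s := by
  obtain ⟨n, hn, hpow⟩ := hx.exists_pow_eq_one
  have hsucc : ∀ k : ℕ, x ^ (k + 1) ∈ s := fun k ↦ by
    induction k with
    | zero => rwa [zero_add, pow_one]
    | succ k ih => rw [pow_succ]; exact mul_mem ih hxs
  obtain ⟨k, rfl⟩ := Nat.exists_eq_add_one_of_ne_zero hn.ne'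
  exact hpow ▸ hsucc k

theorem AddSubgroup.two_mul_card_le_of_ne_top {G : Type*} [AddGroup G] [Finite G]
    {H : AddSubgroup G} (hH : H ≠ ⊤) : 2 * Nat.card H ≤ Nat.card G := by
  rw [← H.card_mul_index, mul_comm]
  exact Nat.mul_le_mul_left _ (H.one_lt_index_of_ne_top hH)

theorem List.Nodup.length_le_ncard {α : Type*} {l : List α} {s : Set α} (hl : l.Nodup)
    (hs : s.Finite) (hsub : ∀ x ∈ l, x ∈ s) : l.length ≤ s.ncard := by
  classical
  rw [← List.toFinset_card_of_nodup hl, ← Set.ncard_coe_finset]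
  exact Set.ncard_le_ncard (fun x hx ↦ hsub x (List.mem_toFinset.mp hx)) hs

theorem Ideal.nodup_zero_one_self_one_add_self_mul_self_of_mem_jacobson_bot {R : Type*} [Ring R]
    {u : R} (hu : u ∈ (⊥ : Ideal R).jacobson) (hu2 : u * u ≠ 0) :
    [0, 1, u, 1 + u, u * u].Nodup := by
  have : Nontrivial R := nontrivial_of_ne _ _ hu2
  set J := (⊥ : Ideal R).jacobson
  have hJ : ∀ x ∈ J, x ≠ 1 := fun x hx h ↦
    (J.ne_top_iff_one.mp (by simp [J])) (h ▸ hx)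
  have hu0 : u ≠ 0 := by rintro rfl; simp at hu2
  have huu : u * u ∈ J := J.mul_mem_left u hu
  simp only [List.nodup_cons, List.mem_cons, List.not_mem_nil, List.nodup_nil, or_false,
    not_or, not_false_eq_true, and_true]
  refine ⟨⟨zero_ne_one, hu0.symm, ?_, hu2.symm⟩, ⟨(hJ u hu).symm, ?_, (hJ _ huu).symm⟩,
    ⟨?_, fun h ↦ hu0 (IsIdempotentElem.eq_zero_of_mem_jacobson_bot h.symm hu)⟩, ?_⟩
  · exact fun h ↦ hJ (-u) (J.neg_mem hu) (neg_eq_of_add_eq_zero_left h.symm)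
  · simpa using hu0
  · simp
  · intro h
    exact hJ (u * u - u) (J.sub_mem huu hu) (by rw [← h]; abel)

theorem NonUnitalSubring.mul_self_eq_zero_of_one_add_mem_of_card_le_four {R : Type*} [Ring R]
    [Finite R] (T : NonUnitalSubring R) (hT : Nat.card T ≤ 4) {u : R}
    (hu : u ∈ (⊥ : Ideal R).jacobson) (hsT : 1 + u ∈ T) : u * u = 0 := by
  by_contra hu2
  have h1T : (1 : R) ∈ T := one_mem_of_isOfFinOrder_of_mem
    (by simpa using (Ideal.isUnit_one_add_mul_of_mem_jacobson_bot hu 1).isOfFinOrder) hsT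
  have huT : u ∈ T := by simpa using T.sub_mem hsT h1T
  have hfive : 5 ≤ (T : Set R).ncard :=
    (Ideal.nodup_zero_one_self_one_add_self_mul_self_of_mem_jacobson_bot hu hu2).length_le_ncard
      (Set.toFinite _) (by simp [T.zero_mem, h1T, huT, hsT, T.mul_mem huT huT])
  rw [← Nat.card_coe_set_eq, SetLike.coe_sort_coe] at hfive
  omega

theorem jacobson_radical_square_zero_general
    (R : Type*) [Ring R] (hcard : Nat.card R = 8)
    (S₁ S₂ S₃ : NonUnitalSubring R)
    (h₁ : S₁ ≠ ⊤) (h₂ : S₂ ≠ ⊤) (h₃ : S₃ ≠ ⊤)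
    (hcover : ∀ r : R, r ∈ S₁ ∨ r ∈ S₂ ∨ r ∈ S₃) :
    ∀ u ∈ (⊥ : Ideal R).jacobson, u * u = 0 := by
  have : Finite R := Nat.finite_of_card_ne_zero (by rw [hcard]; norm_num)
  have hsmall : ∀ T : NonUnitalSubring R, T ≠ ⊤ → Nat.card T ≤ 4 := fun T hT ↦ by
    have := AddSubgroup.two_mul_card_le_of_ne_top (H := T.toAddSubgroup) (by simpa using hT)
    change 2 * Nat.card T ≤ _ at this
    omega
  intro u hu
  rcases hcover (1 + u) with h | h | h
  exacts [S₁.mul_self_eq_zero_of_one_add_mem_of_card_le_four (hsmall S₁ h₁) hu h,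
    S₂.mul_self_eq_zero_of_one_add_mem_of_card_le_four (hsmall S₂ h₂) hu h,
    S₃.mul_self_eq_zero_of_one_add_mem_of_card_le_four (hsmall S₃ h₃) hu h]

/-- Let `R` be a unital ring of order 8 that is the union of three proper
subrings with no nonzero two-sided ideal of `R` in their common intersection.
Then `u² = 0` for every element `u` of the Jacobson radical of `R`. -/
theorem jacobson_radical_square_zero
    (R : Type*) [Ring R] (hcard : Nat.card R = 8)
    (S₁ S₂ S₃ : NonUnitalSubring R)
    (h₁ : S₁ ≠ ⊤) (h₂ : S₂ ≠ ⊤) (h₃ : S₃ ≠ ⊤)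
    (hcover : ∀ r : R, r ∈ S₁ ∨ r ∈ S₂ ∨ r ∈ S₃)
    (hideal : ∀ I : TwoSidedIdeal R,
      (I : Set R) ⊆ ((S₁ ⊓ S₂ ⊓ S₃ : NonUnitalSubring R) : Set R) → I = ⊥) :
    ∀ u ∈ (⊥ : Ideal R).jacobson, u * u = 0 :=
  jacobson_radical_square_zero_general R hcard S₁ S₂ S₃ h₁ h₂ h₃ hcover
end

section
/- The ring R of upper triangular 2×2 matrices over GF(2) is the union of three proper subrings: S₁ = diagonal matrices, S₂ = matrices with equal diagonal entries, S₃ = matrices [[a,c],[0,b]] with a+b+c = 0; and no nonzero two-sided ideal of R is contained in S₁ ∩ S₂ ∩ S₃. -/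
/-!
Write an upper triangular matrix over `𝔽₂` as `[[a, c], [0, b]]`. If `c ≠ 0` and `a ≠ b`, then
`c = 1 = a + b`, so `a + b + c = 0`: every matrix lies in one of the three subrings. The third set
is a subring because in characteristic 2 it is the conjugate of the diagonal subring by
`[[1, 1], [0, 1]]`. A two-sided ideal consisting of diagonal matrices is zero: multiplying `m` by the
matrix unit `e₀₁` on the right or on the left moves `m₀₀` or `m₁₁` into the off-diagonal entry.
-/

namespace Matrix

variable (α : Type*) [Ring α]

def upperTriangularSubring (n : Type*) [Fintype n] [DecidableEq n] [LinearOrder n] :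
    Subring (Matrix n n α) :=
  { blockTriangularSubsemiring α id with neg_mem' := BlockTriangular.neg }

variable {α}

theorem mem_upperTriangularSubring_fin_two {M : Matrix (Fin 2) (Fin 2) α} :
    M ∈ upperTriangularSubring α (Fin 2) ↔ M 1 0 = 0 := by
  refine ⟨fun h => h Fin.zero_lt_one, fun h i j hji => ?_⟩
  fin_cases i <;> fin_cases j <;> first | exact h | exact absurd hji (by decide)

namespace upperTriangularSubring

section

variable {n : Type*} [Fintype n] [DecidableEq n] [LinearOrder n]

def diagEntry (i : n) : upperTriangularSubring α n →+* α where
  toFun m := (m : Matrix n n α) i i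
  map_one' := one_apply_eq i
  map_mul' m m' := by
    change (m.1 * m'.1) i i = m.1 i i * m'.1 i i
    refine (mul_apply ..).trans (Finset.sum_eq_single i (fun k _ hki => ?_) (by simp))
    rcases hki.lt_or_gt with hk | hk
    · rw [m.2 hk, zero_mul]
    · rw [m'.2 hk, mul_zero]
  map_zero' := rfl
  map_add' _ _ := rfl

@[simp]
theorem diagEntry_apply (i : n) (m : upperTriangularSubring α n) :
    diagEntry i m = (m : Matrix n n α) i i := rfl

def single {i j : n} (hij : i ≤ j) (c : α) : upperTriangularSubring α n :=
  ⟨Matrix.single i j c, blockTriangular_single hij c⟩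

@[simp]
theorem coe_single {i j : n} (hij : i ≤ j) (c : α) :
    (single hij c : Matrix n n α) = Matrix.single i j c := rfl

end

variable (m m' : upperTriangularSubring α (Fin 2))

theorem apply_one_zero : (m : Matrix (Fin 2) (Fin 2) α) 1 0 = 0 :=
  mem_upperTriangularSubring_fin_two.mp m.2

theorem coe_mul_apply_zero_zero :
    ((m * m' : upperTriangularSubring α (Fin 2)) : Matrix (Fin 2) (Fin 2) α) 0 0 =
      (m : Matrix (Fin 2) (Fin 2) α) 0 0 * (m' : Matrix (Fin 2) (Fin 2) α) 0 0 :=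
  map_mul (diagEntry 0) m m'

theorem coe_mul_apply_one_one :
    ((m * m' : upperTriangularSubring α (Fin 2)) : Matrix (Fin 2) (Fin 2) α) 1 1 =
      (m : Matrix (Fin 2) (Fin 2) α) 1 1 * (m' : Matrix (Fin 2) (Fin 2) α) 1 1 :=
  map_mul (diagEntry 1) m m'

theorem coe_mul_apply_zero_one :
    ((m * m' : upperTriangularSubring α (Fin 2)) : Matrix (Fin 2) (Fin 2) α) 0 1 =
      (m : Matrix (Fin 2) (Fin 2) α) 0 0 * (m' : Matrix (Fin 2) (Fin 2) α) 0 1 +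
        (m : Matrix (Fin 2) (Fin 2) α) 0 1 * (m' : Matrix (Fin 2) (Fin 2) α) 1 1 := by
  simp [mul_apply, Fin.sum_univ_two]

theorem ext_fin_two {m m' : upperTriangularSubring α (Fin 2)}
    (h00 : (m : Matrix (Fin 2) (Fin 2) α) 0 0 = (m' : Matrix (Fin 2) (Fin 2) α) 0 0)
    (h01 : (m : Matrix (Fin 2) (Fin 2) α) 0 1 = (m' : Matrix (Fin 2) (Fin 2) α) 0 1)
    (h11 : (m : Matrix (Fin 2) (Fin 2) α) 1 1 = (m' : Matrix (Fin 2) (Fin 2) α) 1 1) :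
    m = m' := by
  refine Subtype.ext (Matrix.ext fun i j => ?_)
  fin_cases i <;> fin_cases j
  exacts [h00, h01, (apply_one_zero m).trans (apply_one_zero m').symm, h11]

variable (α) in
def diagonalSubring : Subring (upperTriangularSubring α (Fin 2)) where
  carrier := {m | (m : Matrix (Fin 2) (Fin 2) α) 0 1 = 0}
  mul_mem' {m m'} h h' := by
    simp only [Set.mem_ofPred_eq, coe_mul_apply_zero_one] at h h' ⊢
    rw [h, h', mul_zero, zero_mul, add_zero]
  one_mem' := one_apply_ne zero_ne_one
  add_mem' {m m'} h h' := by
    simp only [Set.mem_ofPred_eq, Subring.coe_add, add_apply] at h h' ⊢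
    rw [h, h', add_zero]
  zero_mem' := rfl
  neg_mem' {m} h := by
    simp only [Set.mem_ofPred_eq, Subring.coe_neg, neg_apply] at h ⊢
    rw [h, neg_zero]

@[simp]
theorem mem_diagonalSubring {m : upperTriangularSubring α (Fin 2)} :
    m ∈ diagonalSubring α ↔ (m : Matrix (Fin 2) (Fin 2) α) 0 1 = 0 := Iff.rfl

variable (α) in
def entrySumZeroSubring [CharP α 2] : Subring (upperTriangularSubring α (Fin 2)) where
  carrier := {m | (m : Matrix (Fin 2) (Fin 2) α) 0 0 + (m : Matrix (Fin 2) (Fin 2) α) 1 1 +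
    (m : Matrix (Fin 2) (Fin 2) α) 0 1 = 0}
  mul_mem' {m m'} h h' := by
    simp only [Set.mem_ofPred_eq, coe_mul_apply_zero_zero, coe_mul_apply_one_one,
      coe_mul_apply_zero_one] at h h' ⊢
    rw [CharTwo.add_eq_zero] at h h'
    rw [← h, ← h']
    noncomm_ring
    simp only [CharTwo.two_zsmul, add_zero]
  one_mem' := by simp [CharTwo.add_self_eq_zero]
  add_mem' {m m'} h h' := by
    simp only [Set.mem_ofPred_eq, Subring.coe_add, add_apply] at h h' ⊢
    linear_combination (norm := abel) h + h'
  zero_mem' := by simp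
  neg_mem' {m} h := by
    simp only [Set.mem_ofPred_eq, Subring.coe_neg, neg_apply] at h ⊢
    linear_combination (norm := abel) -h

@[simp]
theorem mem_entrySumZeroSubring [CharP α 2] {m : upperTriangularSubring α (Fin 2)} :
    m ∈ entrySumZeroSubring α ↔ (m : Matrix (Fin 2) (Fin 2) α) 0 0 +
      (m : Matrix (Fin 2) (Fin 2) α) 1 1 + (m : Matrix (Fin 2) (Fin 2) α) 0 1 = 0 := Iff.rfl

theorem twoSidedIdeal_eq_bot_of_subset_diagonalSubring
    (I : TwoSidedIdeal (upperTriangularSubring α (Fin 2)))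
    (hI : (I : Set (upperTriangularSubring α (Fin 2))) ⊆ diagonalSubring α) : I = ⊥ := by
  refine eq_bot_iff.mpr fun m hm => ?_
  let e₀₁ : upperTriangularSubring α (Fin 2) := single (Fin.zero_le 1) 1
  have h00 : (m : Matrix (Fin 2) (Fin 2) α) 0 0 = 0 := by
    simpa [e₀₁] using hI (I.mul_mem_right m e₀₁ hm)
  have h11 : (m : Matrix (Fin 2) (Fin 2) α) 1 1 = 0 := by
    simpa [e₀₁] using hI (I.mul_mem_left e₀₁ m hm)
  exact ext_fin_two h00 (hI hm) h11

variable [Nontrivial α]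

theorem single_zero_one_notMem_diagonalSubring :
    single (α := α) (Fin.zero_le 1) 1 ∉ diagonalSubring α := by
  simp

theorem single_zero_zero_notMem_eqLocus_diagEntry :
    single (α := α) (le_refl 0) 1 ∉ (diagEntry 0).eqLocus (diagEntry (1 : Fin 2)) := by
  simp

theorem single_zero_zero_notMem_entrySumZeroSubring [CharP α 2] :
    single (α := α) (le_refl 0) 1 ∉ entrySumZeroSubring α := by
  simp

end upperTriangularSubring

end Matrix

theorem ZMod.two_eq_zero_or_eq_or_add_add_eq_zero (a b c : ZMod 2) :
    c = 0 ∨ a = b ∨ a + b + c = 0 := by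
  decide +revert

open Matrix upperTriangularSubring in
/-- The ring `R` of upper triangular 2×2 matrices over `GF(2)` is the union of
three proper subrings: `S₁` the diagonal matrices, `S₂` the matrices with equal
diagonal entries, and `S₃` the matrices `[[a,c],[0,b]]` with `a+b+c = 0`; and
no nonzero two-sided ideal of `R` is contained in `S₁ ∩ S₂ ∩ S₃`. -/
theorem upper_triangular_good_tuple :
    ∃ R : Subring (Matrix (Fin 2) (Fin 2) (ZMod 2)),
      (R : Set (Matrix (Fin 2) (Fin 2) (ZMod 2))) = {M | M 1 0 = 0} ∧
      ∃ S₁ S₂ S₃ : NonUnitalSubring R,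
        (S₁ : Set R) = {m : R | (m : Matrix (Fin 2) (Fin 2) (ZMod 2)) 0 1 = 0} ∧
        (S₂ : Set R) = {m : R | (m : Matrix (Fin 2) (Fin 2) (ZMod 2)) 0 0 =
          (m : Matrix (Fin 2) (Fin 2) (ZMod 2)) 1 1} ∧
        (S₃ : Set R) = {m : R | (m : Matrix (Fin 2) (Fin 2) (ZMod 2)) 0 0 +
          (m : Matrix (Fin 2) (Fin 2) (ZMod 2)) 1 1 +
          (m : Matrix (Fin 2) (Fin 2) (ZMod 2)) 0 1 = 0} ∧
        S₁ ≠ ⊤ ∧ S₂ ≠ ⊤ ∧ S₃ ≠ ⊤ ∧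
        (∀ m : R, m ∈ S₁ ∨ m ∈ S₂ ∨ m ∈ S₃) ∧
        (∀ I : TwoSidedIdeal R,
          (I : Set R) ⊆ ((S₁ ⊓ S₂ ⊓ S₃ : NonUnitalSubring R) : Set R) → I = ⊥) := by
  have ne_top {S : Subring (upperTriangularSubring (ZMod 2) (Fin 2))} {m} (hm : m ∉ S) :
      S.toNonUnitalSubring ≠ ⊤ :=
    (ne_of_mem_of_not_mem' (NonUnitalSubring.mem_top m) hm).symm
  refine ⟨upperTriangularSubring (ZMod 2) (Fin 2),
    Set.ext fun _ => mem_upperTriangularSubring_fin_two,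
    (diagonalSubring _).toNonUnitalSubring,
    ((diagEntry (α := ZMod 2) (0 : Fin 2)).eqLocus (diagEntry 1)).toNonUnitalSubring,
    (entrySumZeroSubring _).toNonUnitalSubring, rfl, rfl, rfl,
    ne_top single_zero_one_notMem_diagonalSubring,
    ne_top single_zero_zero_notMem_eqLocus_diagEntry,
    ne_top single_zero_zero_notMem_entrySumZeroSubring,
    fun m => ZMod.two_eq_zero_or_eq_or_add_add_eq_zero (m.1 0 0) (m.1 1 1) (m.1 0 1),
    fun I hI => twoSidedIdeal_eq_bot_of_subset_diagonalSubring I fun _ hm => (hI hm).1.1⟩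
end

section
/- Let R be a unital ring with R = S₁ ∪ S₂ ∪ S₃, the Sᵢ proper subrings, |R| = 8, |J(R)| = 4, and no nonzero ideal of R in S₁ ∩ S₂ ∩ S₃. Then R is isomorphic to the ring generated over ℤ/2 by 1, x, y with relations x² = y² = xy = yx = 0, i.e., the ℤ/2-unitalization of a zero ring of order 4. -/
/-!
Three proper subgroups covering an abelian group each contain all doubles `g + g`, so the
two-sided ideal `2R` lies in `S₁ ∩ S₂ ∩ S₃` and vanishes: `R` has characteristic 2.
For `j ∈ J(R)` the element `1 + j` is a unit; a finite subring containing a unit contains `1`,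
so some proper subring `S` contains `1` and `j`. In a ring of order 8 the chain
`S ∩ J(R) < S < R` forces `|S ∩ J(R)| ≤ 2`, hence `j² ∈ {0, j}`, and `j² = j` is impossible in
the radical: every element of `J(R)` squares to zero. A nonzero product `jk` would make
`J(R) = {0, j, k, j + k}`, and `jk` equal to one of `j, k, j + k` is killed by `j² = k² = 0`;
so `J(R)² = 0`, and `R = 𝔽₂ ⊕ J(R)` is the trivial square-zero extension of `𝔽₂` by a
2-dimensional vector space.
-/

namespace AddSubgroup

section Cover

variable {G : Type*} [AddCommGroup G] {A B C : AddSubgroup G}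

theorem exists_notMem_notMem_of_ne_top (hB : B ≠ ⊤) (hC : C ≠ ⊤) : ∃ z, z ∉ B ∧ z ∉ C := by
  by_contra! h
  have hsub : ((⊤ : AddSubgroup G) : Set G) ⊆ B ∪ C := fun z _ => or_iff_not_imp_left.mpr (h z)
  rcases AddSubgroupClass.subset_union.mp hsub with hB' | hC'
  exacts [hB (top_le_iff.mp hB'), hC (top_le_iff.mp hC')]

theorem add_self_mem_of_forall_mem_or (hB : B ≠ ⊤) (hC : C ≠ ⊤)
    (hcover : ∀ g, g ∈ A ∨ g ∈ B ∨ g ∈ C) (g : G) : g + g ∈ A := by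
  obtain ⟨z, hzB, hzC⟩ := exists_notMem_notMem_of_ne_top hB hC
  have hzA : z ∈ A := by have := hcover z; tauto
  by_contra hggA
  have hgA : g ∉ A := fun hgA => hggA (add_mem hgA hgA)
  wlog hgB : g ∈ B generalizing B C
  · exact this hC hB (fun x => by have := hcover x; tauto) hzC hzB (by have := hcover g; tauto)
  have hzg : z + g ∈ C := by
    have := (add_mem_cancel_left hzA).not.mpr hgA
    have := (add_mem_cancel_right hgB).not.mpr hzB
    have := hcover (z + g)
    tauto
  have hzgg : z + g + g ∈ C := by
    have := (add_mem_cancel_left hzA).not.mpr hggA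
    have := (add_mem_cancel_right (add_mem hgB hgB)).not.mpr hzB
    have := hcover (z + (g + g))
    rw [add_assoc]
    tauto
  exact hzC ((add_mem_cancel_right ((add_mem_cancel_left hzg).mp hzgg)).mp hzg)

end Cover

theorem two_mul_card_le_card_of_lt {G : Type*} [AddGroup G] {H K : AddSubgroup G} [Finite K]
    (h : H < K) : 2 * Nat.card H ≤ Nat.card K := by
  obtain ⟨k, hk⟩ := card_dvd_of_le h.le
  have hK : Nat.card K ≠ 0 := Nat.card_pos.ne'
  match k with
  | 0 => simp [hk] at hK
  | 1 => exact absurd (eq_of_le_of_card_ge h.le (by simp [hk])) h.ne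
  | k + 2 => rw [hk]; nlinarith

end AddSubgroup

theorem one_mem_of_isUnit_mem {M A : Type*} [Monoid M] [SetLike A M] [MulMemClass A M]
    {S : A} [Finite S] {u : M} (hu : IsUnit u) (huS : u ∈ S) : (1 : M) ∈ S := by
  let f : S → S := fun s => ⟨u * s, mul_mem huS s.2⟩
  have hf : Function.Injective f := fun s t h =>
    Subtype.ext (hu.mul_left_cancel (congrArg Subtype.val h))
  obtain ⟨s, hs⟩ := Finite.injective_iff_surjective.mp hf ⟨u, huS⟩
  have hs1 : (s : M) = 1 := hu.mul_left_cancel (by simpa using congrArg Subtype.val hs)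
  exact hs1 ▸ s.2

section Ring

variable {R : Type*} [Ring R]

theorem Ideal.one_notMem_of_natCard_ne {I : Ideal R} (h : Nat.card I ≠ Nat.card R) :
    (1 : R) ∉ I := by
  intro h1
  rw [(I.eq_top_iff_one).mpr h1] at h
  exact h (Nat.card_congr Submodule.topEquiv.toEquiv)

theorem isUnit_one_add_of_mem_jacobson_bot [IsDedekindFiniteMonoid R] {j : R}
    (hj : j ∈ (⊥ : Ideal R).jacobson) : IsUnit (1 + j) := by
  obtain ⟨s, hs⟩ := Ideal.exists_mul_add_sub_mem_of_mem_jacobson j hj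
  rw [Ideal.mem_bot, sub_eq_zero, add_comm] at hs
  exact IsUnit.of_mul_eq_one_right s hs

theorem IsIdempotentElem.eq_zero_of_mem_jacobson_bot_s16 {e : R} (he : IsIdempotentElem e)
    (hJ : e ∈ (⊥ : Ideal R).jacobson) : e = 0 := by
  obtain ⟨s, hs⟩ := Ideal.exists_mul_add_sub_mem_of_mem_jacobson (-e) (neg_mem hJ)
  rw [Ideal.mem_bot, sub_eq_zero] at hs
  calc e = s * (-e + 1) * e := by rw [hs, one_mul]
    _ = 0 := by rw [mul_assoc, add_mul, neg_mul, he.eq, one_mul, neg_add_cancel, mul_zero]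

theorem two_eq_zero_of_forall_mem_or {S₁ S₂ S₃ : NonUnitalSubring R}
    (h₁ : S₁ ≠ ⊤) (h₂ : S₂ ≠ ⊤) (h₃ : S₃ ≠ ⊤) (hcover : ∀ r : R, r ∈ S₁ ∨ r ∈ S₂ ∨ r ∈ S₃)
    (hideal : ∀ I : TwoSidedIdeal R,
      (I : Set R) ⊆ ((S₁ ⊓ S₂ ⊓ S₃ : NonUnitalSubring R) : Set R) → I = ⊥) :
    (2 : R) = 0 := by
  have hdouble {A B C : NonUnitalSubring R} (hB : B ≠ ⊤) (hC : C ≠ ⊤)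
      (hcov : ∀ r : R, r ∈ A ∨ r ∈ B ∨ r ∈ C) (g : R) : g + g ∈ A :=
    AddSubgroup.add_self_mem_of_forall_mem_or (A := A.toAddSubgroup)
      (mt NonUnitalSubring.toAddSubgroup_eq_top.mp hB)
      (mt NonUnitalSubring.toAddSubgroup_eq_top.mp hC) hcov g
  have hdouble₃ (g : R) : g + g ∈ S₁ ⊓ S₂ ⊓ S₃ :=
    ⟨⟨hdouble h₂ h₃ hcover g, hdouble h₁ h₃ (fun r => by have := hcover r; tauto) g⟩,
      hdouble h₁ h₂ (fun r => by have := hcover r; tauto) g⟩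
  let I : TwoSidedIdeal R := .mk' (Set.range fun g : R => g + g) ⟨0, add_zero 0⟩
    (by rintro _ _ ⟨x, rfl⟩ ⟨y, rfl⟩; exact ⟨x + y, add_add_add_comm x y x y⟩)
    (by rintro _ ⟨x, rfl⟩; exact ⟨-x, (neg_add x x).symm⟩)
    (by rintro x _ ⟨y, rfl⟩; exact ⟨x * y, (mul_add x y y).symm⟩)
    (by rintro _ y ⟨x, rfl⟩; exact ⟨x * y, (add_mul x x y).symm⟩)
  have hI : I = ⊥ := hideal I fun x hx => by
    obtain ⟨g, rfl⟩ := (TwoSidedIdeal.mem_mk' _ _ _ _ _ _ x).mp hx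
    exact hdouble₃ g
  have h2 : (1 : R) + 1 ∈ I := (TwoSidedIdeal.mem_mk' _ _ _ _ _ _ _).mpr ⟨1, rfl⟩
  rwa [hI, TwoSidedIdeal.mem_bot, one_add_one_eq_two] at h2

theorem mul_self_eq_zero_of_mem_jacobson_of_one_mem (hR : Nat.card R = 8)
    {S : NonUnitalSubring R} (hS : S ≠ ⊤) (h1S : (1 : R) ∈ S)
    (h1J : (1 : R) ∉ (⊥ : Ideal R).jacobson) {j : R} (hjS : j ∈ S)
    (hjJ : j ∈ (⊥ : Ideal R).jacobson) : j * j = 0 := by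
  have : Finite R := Nat.finite_of_card_ne_zero (by omega)
  set H := S.toAddSubgroup ⊓ (⊥ : Ideal R).jacobson.toAddSubgroup
  have hHS : H < S.toAddSubgroup := SetLike.lt_iff_le_and_exists.mpr
    ⟨inf_le_left, 1, h1S, fun h => h1J h.2⟩
  have hSR : S.toAddSubgroup < ⊤ :=
    lt_top_iff_ne_top.mpr (mt NonUnitalSubring.toAddSubgroup_eq_top.mp hS)
  have hH : ¬ 2 < (H : Set R).ncard := by
    have := AddSubgroup.two_mul_card_le_card_of_lt hHS
    have := AddSubgroup.two_mul_card_le_card_of_lt hSR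
    rw [AddSubgroup.card_top] at this
    rw [← Nat.card_coe_set_eq]
    change ¬ 2 < Nat.card H
    omega
  rw [Set.two_lt_ncard_iff] at hH
  push Not at hH
  by_contra hjj
  have hj : j ≠ 0 := by rintro rfl; exact hjj (mul_zero 0)
  have hidem : IsIdempotentElem j :=
    (hH 0 j (j * j) (zero_mem H) ⟨hjS, hjJ⟩ ⟨S.mul_mem hjS hjS, Ideal.mul_mem_left _ j hjJ⟩
      hj.symm (Ne.symm hjj)).symm
  exact hj (hidem.eq_zero_of_mem_jacobson_bot_s16 hjJ)

theorem mul_self_eq_zero_of_mem_jacobson_of_forall_mem_or (hR : Nat.card R = 8)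
    (h1J : (1 : R) ∉ (⊥ : Ideal R).jacobson) {S₁ S₂ S₃ : NonUnitalSubring R}
    (h₁ : S₁ ≠ ⊤) (h₂ : S₂ ≠ ⊤) (h₃ : S₃ ≠ ⊤) (hcover : ∀ r : R, r ∈ S₁ ∨ r ∈ S₂ ∨ r ∈ S₃)
    {j : R} (hj : j ∈ (⊥ : Ideal R).jacobson) : j * j = 0 := by
  have : Finite R := Nat.finite_of_card_ne_zero (by omega)
  have hu := isUnit_one_add_of_mem_jacobson_bot hj
  have key {S : NonUnitalSubring R} (hS : S ≠ ⊤) (huS : 1 + j ∈ S) : j * j = 0 :=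
    have h1S := one_mem_of_isUnit_mem hu huS
    mul_self_eq_zero_of_mem_jacobson_of_one_mem hR hS h1S h1J ((add_mem_cancel_left h1S).mp huS) hj
  rcases hcover (1 + j) with h | h | h
  exacts [key h₁ h, key h₂ h, key h₃ h]

theorem mul_eq_zero_of_mul_mem_insert {p q : R} (hp : p * p = 0) (hq : q * q = 0)
    (h : p * q ∈ ({0, p, q, p + q} : Set R)) : p * q = 0 := by
  rcases h with h | h | h | h
  · exact h
  · simpa [mul_assoc, hq] using (congrArg (· * q) h).symm
  · simpa [← mul_assoc, hp] using (congrArg (p * ·) h).symm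
  · simpa [← mul_assoc, mul_add, hp] using (congrArg (p * ·) h).symm

theorem Ideal.mul_eq_zero_of_natCard_eq_four {I : Ideal R} (hI : Nat.card I = 4)
    (hsq : ∀ j ∈ I, j * j = 0) {j k : R} (hj : j ∈ I) (hk : k ∈ I) : j * k = 0 := by
  have : Finite I := Nat.finite_of_card_ne_zero (by omega)
  by_contra hjk
  have hj0 : j ≠ 0 := by rintro rfl; simp at hjk
  have hk0 : k ≠ 0 := by rintro rfl; simp at hjk
  have hne : j ≠ k := by rintro rfl; exact hjk (hsq j hj)
  have hsum : j + k ≠ 0 := by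
    intro h
    rw [eq_neg_of_add_eq_zero_right h, mul_neg, hsq j hj, neg_zero] at hjk
    exact hjk rfl
  have hfour : ({0, j, k, j + k} : Set R).ncard = 4 := by
    rw [Set.ncard_insert_of_notMem, Set.ncard_insert_of_notMem, Set.ncard_pair]
    all_goals simp_all [eq_comm]
  have heq : ({0, j, k, j + k} : Set R) = I := by
    refine Set.eq_of_subset_of_ncard_le ?_ ?_ (Set.toFinite _)
    · rintro x (rfl | rfl | rfl | rfl)
      exacts [I.zero_mem, hj, hk, I.add_mem hj hk]
    · rw [hfour, ← Nat.card_coe_set_eq]; exact hI.le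
  exact hjk (mul_eq_zero_of_mul_mem_insert (hsq j hj) (hsq k hk) (heq ▸ I.mul_mem_left j hk))


theorem nonempty_ringEquiv_trivSqZeroExt [Algebra (ZMod 2) R] (hR : Nat.card R = 8)
    {I : Ideal R} (hI : Nat.card I = 4) (hmul : ∀ j ∈ I, ∀ k ∈ I, j * k = 0) :
    Nonempty (R ≃+* TrivSqZeroExt (ZMod 2) (ZMod 2 × ZMod 2)) := by
  have : Finite R := Nat.finite_of_card_ne_zero (by omega)
  let V := I.restrictScalars (ZMod 2)
  have hV : Module.finrank (ZMod 2) V = Module.finrank (ZMod 2) (ZMod 2 × ZMod 2) := by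
    have h := Module.natCard_eq_pow_finrank (K := ZMod 2) (V := V)
    rw [show Nat.card V = 4 from hI, Nat.card_zmod] at h
    simpa using (Nat.pow_right_injective le_rfl (h.symm.trans (by norm_num : 4 = 2 ^ 2)))
  let e := LinearEquiv.ofFinrankEq (ZMod 2 × ZMod 2) V hV.symm
  let f : (ZMod 2 × ZMod 2) →ₗ[ZMod 2] R := V.subtype ∘ₗ e.toLinearMap
  have hfI (y : ZMod 2 × ZMod 2) : f y ∈ I := (e y).2
  have hf : Function.Injective f := V.injective_subtype.comp e.injective
  let F := TrivSqZeroExt.lift (Algebra.ofId (ZMod 2) R) f (fun x y => hmul _ (hfI x) _ (hfI y))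
    (fun r x => by rw [map_smul, Algebra.ofId_apply, Algebra.smul_def])
    (fun r x => by
      rw [op_smul_eq_smul, map_smul, Algebra.ofId_apply, Algebra.smul_def, Algebra.commutes])
  have hF : Function.Injective F := by
    refine (injective_iff_map_eq_zero F).mpr fun x hx => ?_
    have hFx : F x = algebraMap (ZMod 2) R x.fst + f x.snd := TrivSqZeroExt.lift_def _ _ _ _ _ x
    obtain h0 | h1 := (by decide : ∀ a : ZMod 2, a = 0 ∨ a = 1) x.fst
    · rw [hFx, h0, map_zero, zero_add, ← map_zero f] at hx
      exact TrivSqZeroExt.ext h0 (hf hx)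
    · rw [hFx, h1, map_one, add_eq_zero_iff_eq_neg] at hx
      exact absurd (hx ▸ I.neg_mem (hfI x.snd)) (Ideal.one_notMem_of_natCard_ne (by omega))
  have hcard : Nat.card (TrivSqZeroExt (ZMod 2) (ZMod 2 × ZMod 2)) = Nat.card R := by
    rw [hR]
    exact (Nat.card_prod _ _).trans (by simp)
  exact ⟨(RingEquiv.ofBijective F ((Nat.bijective_iff_injective_and_card F).mpr ⟨hF, hcard⟩)).symm⟩

end Ring

/-- Let `R` be a unital ring of order 8 which is the union of three proper
subrings `S₁, S₂, S₃` with no nonzero two-sided ideal of `R` in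
`S₁ ∩ S₂ ∩ S₃`, and whose Jacobson radical has order 4.  Then `R` is
isomorphic to the ring generated over `ℤ/2` by `1, x, y` with relations
`x² = y² = xy = yx = 0`, i.e. the `ℤ/2`-unitalization of a zero ring of
order 4, realized here as the trivial square-zero extension
`TrivSqZeroExt (ZMod 2) (ZMod 2 × ZMod 2)`. -/
theorem good_ring_order_eight_radical_four
    (R : Type*) [Ring R] (hcard : Nat.card R = 8)
    (hJ : Nat.card ((⊥ : Ideal R).jacobson) = 4)
    (S₁ S₂ S₃ : NonUnitalSubring R)
    (h₁ : S₁ ≠ ⊤) (h₂ : S₂ ≠ ⊤) (h₃ : S₃ ≠ ⊤)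
    (hcover : ∀ r : R, r ∈ S₁ ∨ r ∈ S₂ ∨ r ∈ S₃)
    (hideal : ∀ I : TwoSidedIdeal R,
      (I : Set R) ⊆ ((S₁ ⊓ S₂ ⊓ S₃ : NonUnitalSubring R) : Set R) → I = ⊥) :
    Nonempty (R ≃+* TrivSqZeroExt (ZMod 2) (ZMod 2 × ZMod 2)) := by
  have h1J : (1 : R) ∉ (⊥ : Ideal R).jacobson := Ideal.one_notMem_of_natCard_ne (by omega)
  have : CharP R 2 := CharTwo.of_one_ne_zero_of_two_eq_zero
    (fun h => h1J (h ▸ zero_mem _)) (two_eq_zero_of_forall_mem_or h₁ h₂ h₃ hcover hideal)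
  let := ZMod.algebra R 2
  have hsq (j : R) (hj : j ∈ (⊥ : Ideal R).jacobson) : j * j = 0 :=
    mul_self_eq_zero_of_mem_jacobson_of_forall_mem_or hcard h1J h₁ h₂ h₃ hcover hj
  exact nonempty_ringEquiv_trivSqZeroExt hcard hJ
    fun j hj k hk => Ideal.mul_eq_zero_of_natCard_eq_four hJ hsq hj hk
end
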